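/- arXiv:2212.05304 — 8 statements merged into one kernel-verified Lean document; each statement's English description precedes it below -/
import Mathlib

section
/- Let S be a finite type and P a row-stochastic matrix on S. For x,y ∈ S set m(x,y,z) = min(P(x,z), P(y,z)) and κ(x,y) = ∑_z m(x,y,z). Define the coupling kernel K on S × S by: K((x,y),(x',y')) = (P(x,x') − m(x,y,x'))·(P(y,y') − m(x,y,y'))/(1 − κ(x,y)) + [x' = y']·m(x,y,x') when x ≠ y and κ(x,y) < 1; K((x,y),(x',y')) = [x' = y']·m(x,y,x') when x ≠ y and κ(x,y) = 1; and K((x,x),(x',y')) = [x' = y']·P(x,x'). Then K is a row-stochastic matrix on S × S, and for every (x,y) ∈ S × S its one-step marginals reproduce P: ∑_{y'} K((x,y),(x',y')) = P(x,x') for every x', and ∑_{x'} K((x,y),(x',y')) = P(y,y') for every y'. -/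
open Finset

variable {S : Type*} [Fintype S] [DecidableEq S]

/-- The overlap coefficient `κ(x,y) = ∑_z min(P(x,z), P(y,z))` of a transition matrix. -/
noncomputable def overlap (P : S → S → ℝ) (x y : S) : ℝ := ∑ z, min (P x z) (P y z)

/-- The coupling kernel on `S × S` associated with a transition matrix `P`. -/
noncomputable def couplingKernel (P : S → S → ℝ) : S × S → S × S → ℝ := fun p p' =>
  if p.1 = p.2 then (if p'.1 = p'.2 then P p.1 p'.1 else 0)
  else if overlap P p.1 p.2 < 1 then
    (P p.1 p'.1 - min (P p.1 p'.1) (P p.2 p'.1)) *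
        (P p.2 p'.2 - min (P p.1 p'.2) (P p.2 p'.2)) / (1 - overlap P p.1 p.2) +
      (if p'.1 = p'.2 then min (P p.1 p'.1) (P p.2 p'.1) else 0)
  else (if p'.1 = p'.2 then min (P p.1 p'.1) (P p.2 p'.1) else 0)

/-- Lemma 2 (one-step form): the coupling kernel is row-stochastic and both of its
one-step marginals reproduce `P`. -/
theorem couplingKernel_stochastic_and_marginals
    (P : S → S → ℝ) (hP0 : ∀ x y, 0 ≤ P x y) (hP1 : ∀ x, ∑ y, P x y = 1) :
    (∀ p p' : S × S, 0 ≤ couplingKernel P p p') ∧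
    (∀ p : S × S, ∑ p' : S × S, couplingKernel P p p' = 1) ∧
    (∀ x y x' : S, ∑ y' : S, couplingKernel P (x, y) (x', y') = P x x') ∧
    (∀ x y y' : S, ∑ x' : S, couplingKernel P (x, y) (x', y') = P y y') := by
  have hk_le : ∀ x y : S, overlap P x y ≤ 1 := by
    intro x y
    rw [← hP1 x]
    exact Finset.sum_le_sum fun z _ => min_le_left _ _
  have hm0 : ∀ x y z : S, 0 ≤ min (P x z) (P y z) := fun x y z => le_min (hP0 x z) (hP0 y z)
  have hres : ∀ x y : S, ∑ z, (P x z - min (P x z) (P y z)) = 1 - overlap P x y := by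
    intro x y; rw [Finset.sum_sub_distrib, hP1, overlap]
  have hres' : ∀ x y : S, ∑ z, (P y z - min (P x z) (P y z)) = 1 - overlap P x y := by
    intro x y; rw [Finset.sum_sub_distrib, hP1, overlap]
  have heq : ∀ x y, overlap P x y = 1 →
      ∀ z, min (P x z) (P y z) = P x z ∧ min (P x z) (P y z) = P y z := by
    intro x y h z
    have h1 : ∑ z, (P x z - min (P x z) (P y z)) = 0 := by rw [hres, h]; ring
    have h2 : ∑ z, (P y z - min (P x z) (P y z)) = 0 := by rw [hres', h]; ring
    have hz1 := (Finset.sum_eq_zero_iff_of_nonneg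
      (fun z _ => sub_nonneg.2 (min_le_left (P x z) (P y z)))).1 h1 z (mem_univ z)
    have hz2 := (Finset.sum_eq_zero_iff_of_nonneg
      (fun z _ => sub_nonneg.2 (min_le_right (P x z) (P y z)))).1 h2 z (mem_univ z)
    constructor <;> linarith
  have hmarg1 : ∀ x y x' : S, ∑ y', couplingKernel P (x, y) (x', y') = P x x' := by
    intro x y x'
    by_cases hxy : x = y
    · subst hxy
      simp [couplingKernel]
    · by_cases hk : overlap P x y < 1
      · have hc : 1 - overlap P x y ≠ 0 := by intro h; linarith [sub_pos.2 hk]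
        simp only [couplingKernel, if_neg hxy, if_pos hk]
        rw [Finset.sum_add_distrib]
        have h1 : ∑ y' : S, (P x x' - min (P x x') (P y x')) *
            (P y y' - min (P x y') (P y y')) / (1 - overlap P x y)
            = P x x' - min (P x x') (P y x') := by
          rw [← Finset.sum_div, ← Finset.mul_sum, hres' x y, mul_div_assoc, div_self hc,
            mul_one]
        rw [h1]
        simp
      · have hk1 : overlap P x y = 1 := le_antisymm (hk_le x y) (not_lt.1 hk)
        simp only [couplingKernel, if_neg hxy, if_neg hk]
        rw [Finset.sum_ite_eq]
        simp [(heq x y hk1 x').1]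
  have hmarg2 : ∀ x y y' : S, ∑ x', couplingKernel P (x, y) (x', y') = P y y' := by
    intro x y y'
    by_cases hxy : x = y
    · subst hxy
      simp [couplingKernel]
    · by_cases hk : overlap P x y < 1
      · have hc : 1 - overlap P x y ≠ 0 := by intro h; linarith [sub_pos.2 hk]
        simp only [couplingKernel, if_neg hxy, if_pos hk]
        rw [Finset.sum_add_distrib]
        have h1 : ∑ x' : S, (P x x' - min (P x x') (P y x')) *
            (P y y' - min (P x y') (P y y')) / (1 - overlap P x y)
            = P y y' - min (P x y') (P y y') := by
          rw [← Finset.sum_div, ← Finset.sum_mul, hres x y, mul_comm, mul_div_assoc,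
            div_self hc, mul_one]
        rw [h1]
        simp
      · have hk1 : overlap P x y = 1 := le_antisymm (hk_le x y) (not_lt.1 hk)
        simp only [couplingKernel, if_neg hxy, if_neg hk]
        rw [Finset.sum_ite_eq']
        simp [(heq x y hk1 y').2]
  refine ⟨?_, ?_, hmarg1, hmarg2⟩
  · intro p p'
    unfold couplingKernel
    split_ifs with h1 h2 h3 h4 h5
    · exact hP0 _ _
    · exact le_refl 0
    · exact add_nonneg (div_nonneg (mul_nonneg (sub_nonneg.2 (min_le_left _ _))
        (sub_nonneg.2 (min_le_right _ _))) (le_of_lt (sub_pos.2 h3))) (hm0 _ _ _)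
    · exact add_nonneg (div_nonneg (mul_nonneg (sub_nonneg.2 (min_le_left _ _))
        (sub_nonneg.2 (min_le_right _ _))) (le_of_lt (sub_pos.2 h3))) (le_refl 0)
    · exact hm0 _ _ _
    · exact le_refl 0
  · intro p
    rw [Fintype.sum_prod_type]
    calc ∑ x' : S, ∑ y' : S, couplingKernel P p (x', y')
        = ∑ x' : S, P p.1 x' := by
          refine Finset.sum_congr rfl fun x' _ => ?_
          have := hmarg1 p.1 p.2 x'
          simpa using this
      _ = 1 := hP1 p.1
end

section
/- Let S be a finite type, P a row-stochastic matrix on S, and K the coupling kernel on S × S associated with P (as in Lemma 2). Let w be a probability vector on S × S whose first marginal is μ (i.e., ∑_y w(x,y) = μ(x) for all x) and whose second marginal is ν. Then for every n ∈ ℕ, the first marginal of w·Kⁿ equals μ·Pⁿ and the second marginal of w·Kⁿ equals ν·Pⁿ, where (μP)(y) = ∑_x μ(x)P(x,y). -/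
open Finset

variable {S : Type*} [Fintype S] [DecidableEq S]

lemma row_fst (P : S → S → ℝ) (hP0 : ∀ x y, 0 ≤ P x y) (hP1 : ∀ x, ∑ y, P x y = 1)
    (a b x : S) : ∑ y, couplingKernel P (a, b) (x, y) = P a x := by
  by_cases hab : a = b
  · subst hab
    simp [couplingKernel, Finset.sum_ite_eq]
  · by_cases hκ : overlap P a b < 1
    · have hne : (1 : ℝ) - overlap P a b ≠ 0 := sub_ne_zero.2 (ne_of_lt hκ).symm
      simp only [couplingKernel, hab, hκ, if_true, if_false]
      rw [Finset.sum_add_distrib, Finset.sum_ite_eq]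
      simp only [Finset.mem_univ, if_true]
      have h1 : ∑ y, (P a x - min (P a x) (P b x)) *
          (P b y - min (P a y) (P b y)) / (1 - overlap P a b)
          = (P a x - min (P a x) (P b x)) * (1 - overlap P a b) / (1 - overlap P a b) := by
        rw [← Finset.sum_div, ← Finset.mul_sum, Finset.sum_sub_distrib, hP1 b, overlap]
      rw [h1, mul_div_assoc, div_self hne, mul_one]
      ring
    · have hle : ∀ z, min (P a z) (P b z) ≤ P a z := fun z => min_le_left _ _
      have h1 : overlap P a b ≤ 1 := by
        rw [← hP1 a]; exact Finset.sum_le_sum fun z _ => hle z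
      have hκ1 : overlap P a b = 1 := le_antisymm h1 (not_lt.mp hκ)
      have hmin : ∀ z, min (P a z) (P b z) = P a z := by
        have hsum : ∑ z, (P a z - min (P a z) (P b z)) = 0 := by
          rw [Finset.sum_sub_distrib, hP1 a, ← overlap, hκ1, sub_self]
        intro z
        have := (Finset.sum_eq_zero_iff_of_nonneg
          (fun z _ => sub_nonneg.2 (hle z))).mp hsum z (Finset.mem_univ z)
        linarith
      simp only [couplingKernel, hab, hκ, if_false]
      rw [Finset.sum_ite_eq]
      simp [hmin x]

lemma row_snd (P : S → S → ℝ) (hP0 : ∀ x y, 0 ≤ P x y) (hP1 : ∀ x, ∑ y, P x y = 1)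
    (a b y : S) : ∑ x, couplingKernel P (a, b) (x, y) = P b y := by
  by_cases hab : a = b
  · subst hab
    simp only [couplingKernel, if_true]
    rw [Finset.sum_ite_eq']
    simp
  · by_cases hκ : overlap P a b < 1
    · have hne : (1 : ℝ) - overlap P a b ≠ 0 := sub_ne_zero.2 (ne_of_lt hκ).symm
      simp only [couplingKernel, hab, hκ, if_true, if_false]
      rw [Finset.sum_add_distrib, Finset.sum_ite_eq']
      simp only [Finset.mem_univ, if_true]
      have h1 : ∑ x, (P a x - min (P a x) (P b x)) *
          (P b y - min (P a y) (P b y)) / (1 - overlap P a b)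
          = (1 - overlap P a b) * (P b y - min (P a y) (P b y)) / (1 - overlap P a b) := by
        rw [← Finset.sum_div, ← Finset.sum_mul, Finset.sum_sub_distrib, hP1 a, overlap]
      rw [h1, mul_comm, mul_div_assoc, div_self hne, mul_one]
      ring
    · have hle : ∀ z, min (P a z) (P b z) ≤ P b z := fun z => min_le_right _ _
      have h1 : overlap P a b ≤ 1 := by
        rw [← hP1 b]; exact Finset.sum_le_sum fun z _ => hle z
      have hκ1 : overlap P a b = 1 := le_antisymm h1 (not_lt.mp hκ)
      have hmin : ∀ z, min (P a z) (P b z) = P b z := by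
        have hsum : ∑ z, (P b z - min (P a z) (P b z)) = 0 := by
          rw [Finset.sum_sub_distrib, hP1 b, ← overlap, hκ1, sub_self]
        intro z
        have := (Finset.sum_eq_zero_iff_of_nonneg
          (fun z _ => sub_nonneg.2 (hle z))).mp hsum z (Finset.mem_univ z)
        linarith
      simp only [couplingKernel, hab, hκ, if_false]
      rw [Finset.sum_ite_eq']
      simp [hmin y]

/-- Lemma 2 (n-step form): the coupled chain started from any coupling `w` of `(μ, ν)`
has the same marginal evolution as two copies of the original chain started from `μ`
and `ν`. -/
theorem couplingKernel_iterate_marginals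
    (P : S → S → ℝ) (hP0 : ∀ x y, 0 ≤ P x y) (hP1 : ∀ x, ∑ y, P x y = 1)
    (w : S × S → ℝ) (hw0 : ∀ p, 0 ≤ w p) (hw1 : ∑ p : S × S, w p = 1)
    (μ ν : S → ℝ)
    (hwμ : ∀ x, ∑ y, w (x, y) = μ x) (hwν : ∀ y, ∑ x, w (x, y) = ν y)
    (n : ℕ) :
    (∀ x, ∑ y, ((fun v p' => ∑ p : S × S, v p * couplingKernel P p p')^[n] w) (x, y)
        = ((fun v y => ∑ x, v x * P x y)^[n] μ) x) ∧
    (∀ y, ∑ x, ((fun v p' => ∑ p : S × S, v p * couplingKernel P p p')^[n] w) (x, y)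
        = ((fun v y => ∑ x, v x * P x y)^[n] ν) y) := by
  induction n with
  | zero => exact ⟨hwμ, hwν⟩
  | succ n ih =>
    obtain ⟨ih1, ih2⟩ := ih
    simp only [Function.iterate_succ_apply']
    constructor
    · intro x
      rw [Finset.sum_comm]
      calc ∑ p : S × S, ∑ y, ((fun v p' => ∑ p : S × S, v p * couplingKernel P p p')^[n] w) p
              * couplingKernel P p (x, y)
          = ∑ p : S × S, ((fun v p' => ∑ p : S × S, v p * couplingKernel P p p')^[n] w) p
              * P p.1 x := by
            refine Finset.sum_congr rfl fun p _ => ?_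
            rw [← Finset.mul_sum, row_fst P hP0 hP1 p.1 p.2 x]
        _ = _ := by
            rw [Fintype.sum_prod_type]
            dsimp only
            refine Finset.sum_congr rfl fun a _ => ?_
            rw [← Finset.sum_mul, ih1 a]
    · intro y
      rw [Finset.sum_comm]
      calc ∑ p : S × S, ∑ x, ((fun v p' => ∑ p : S × S, v p * couplingKernel P p p')^[n] w) p
              * couplingKernel P p (x, y)
          = ∑ p : S × S, ((fun v p' => ∑ p : S × S, v p * couplingKernel P p p')^[n] w) p
              * P p.2 y := by
            refine Finset.sum_congr rfl fun p _ => ?_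
            rw [← Finset.mul_sum, row_snd P hP0 hP1 p.1 p.2 y]
        _ = _ := by
            rw [Fintype.sum_prod_type_right]
            dsimp only
            refine Finset.sum_congr rfl fun b _ => ?_
            rw [← Finset.sum_mul]
            congr 1
            exact ih2 b
end

section
/- Let S be a finite type and P a row-stochastic matrix on S. With κ(x,y) = ∑_z min(P(x,z),P(y,z)), define the residual coupling matrix Q indexed by S × S by Q((x,y),(x',y')) = (P(x,x') − min(P(x,x'),P(y,x')))·(P(y,y') − min(P(x,y'),P(y,y')))/(1 − κ(x,y)) when x ≠ y and κ(x,y) < 1, and Q((x,y),(x',y')) = 0 when x = y or κ(x,y) = 1. Then for every n ≥ 1 and all probability vectors μ, ν on S: ∑_x |(μPⁿ)(x) − (νPⁿ)(x)| ≤ maxRowSum(Qⁿ) · ∑_x |μ(x) − ν(x)|, where maxRowSum(A) = max_i ∑_j A(i,j) and (μP)(y) = ∑_x μ(x)P(x,y). -/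
open Finset

variable {S : Type*} [Fintype S] [DecidableEq S]

noncomputable def residualQ (P : S → S → ℝ) : Matrix (S × S) (S × S) ℝ :=
  Matrix.of fun p p' =>
    if p.1 ≠ p.2 ∧ overlap P p.1 p.2 < 1 then
      (P p.1 p'.1 - min (P p.1 p'.1) (P p.2 p'.1)) *
        (P p.2 p'.2 - min (P p.1 p'.2) (P p.2 p'.2)) / (1 - overlap P p.1 p.2)
    else 0

noncomputable def maxRowSum {I : Type*} [Fintype I] (A : Matrix I I ℝ) : ℝ :=
  ⨆ i, ∑ j, A i j

namespace TVAux

/-- marginal-difference operator -/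
def phi (g : S × S → ℝ) : S → ℝ := fun z => (∑ y, g (z, y)) - (∑ y, g (y, z))

variable (P : S → S → ℝ)

lemma residualQ_nonneg (p p' : S × S) : 0 ≤ residualQ P p p' := by
  unfold residualQ
  simp only [Matrix.of_apply]
  split_ifs with h
  · exact div_nonneg (mul_nonneg (sub_nonneg.2 (min_le_left _ _))
      (sub_nonneg.2 (min_le_right _ _))) (by linarith [h.2])
  · exact le_refl 0

lemma residualQ_pow_nonneg (n : ℕ) (p p' : S × S) : 0 ≤ (residualQ P ^ n) p p' := by
  induction n generalizing p p' with
  | zero =>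
    simp only [pow_zero, Matrix.one_apply]
    split_ifs <;> norm_num
  | succ n ih =>
    rw [pow_succ, Matrix.mul_apply]
    exact Finset.sum_nonneg fun q _ => mul_nonneg (ih p q) (residualQ_nonneg P q p')

lemma sum_r1 (hP1 : ∀ x, ∑ y, P x y = 1) (x y : S) :
    ∑ z, (P x z - min (P x z) (P y z)) = 1 - overlap P x y := by
  rw [Finset.sum_sub_distrib, hP1, overlap]

lemma sum_r2 (hP1 : ∀ x, ∑ y, P x y = 1) (x y : S) :
    ∑ z, (P y z - min (P x z) (P y z)) = 1 - overlap P x y := by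
  rw [Finset.sum_sub_distrib, hP1, overlap]

lemma marg (hP1 : ∀ x, ∑ y, P x y = 1) (x y z : S) :
    (∑ y', residualQ P (x, y) (z, y')) - (∑ x', residualQ P (x, y) (x', z))
      = P x z - P y z := by
  by_cases h : x ≠ y ∧ overlap P x y < 1
  · have hc : (1 : ℝ) - overlap P x y ≠ 0 := by linarith [h.2]
    have e1 : ∑ y', residualQ P (x, y) (z, y') = P x z - min (P x z) (P y z) := by
      simp only [residualQ, Matrix.of_apply, if_pos h]
      rw [← Finset.sum_div, ← Finset.mul_sum, sum_r2 P hP1 x y,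
        mul_div_assoc, div_self hc, mul_one]
    have e2 : ∑ x', residualQ P (x, y) (x', z) = P y z - min (P x z) (P y z) := by
      simp only [residualQ, Matrix.of_apply, if_pos h]
      rw [← Finset.sum_div, ← Finset.sum_mul, sum_r1 P hP1 x y,
        mul_comm, mul_div_assoc, div_self hc, mul_one]
    rw [e1, e2]; ring
  · have hzero : ∀ p' : S × S, residualQ P (x, y) p' = 0 := fun p' => by
      simp only [residualQ, Matrix.of_apply, if_neg h]
    rw [Finset.sum_eq_zero (fun y' _ => hzero (z, y')),
      Finset.sum_eq_zero (fun x' _ => hzero (x', z)), sub_self]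
    push_neg at h
    by_cases hxy : x = y
    · rw [hxy, sub_self]
    · have hk : overlap P x y = 1 := by
        refine le_antisymm ?_ (h hxy)
        have : overlap P x y ≤ ∑ z, P x z :=
          Finset.sum_le_sum fun z _ => min_le_left _ _
        rw [hP1 x] at this; exact this
      have h1 : ∀ w ∈ Finset.univ, P x w - min (P x w) (P y w) = 0 := by
        rw [← Finset.sum_eq_zero_iff_of_nonneg
          (fun w _ => sub_nonneg.2 (min_le_left (P x w) (P y w)))]
        rw [sum_r1 P hP1 x y, hk, sub_self]
      have h2 : ∀ w ∈ Finset.univ, P y w - min (P x w) (P y w) = 0 := by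
        rw [← Finset.sum_eq_zero_iff_of_nonneg
          (fun w _ => sub_nonneg.2 (min_le_right (P x w) (P y w)))]
        rw [sum_r2 P hP1 x y, hk, sub_self]
      have := h1 z (Finset.mem_univ z)
      have := h2 z (Finset.mem_univ z)
      linarith

lemma phi_vecMul (hP1 : ∀ x, ∑ y, P x y = 1) (g : S × S → ℝ) :
    phi (Matrix.vecMul g (residualQ P)) = Matrix.vecMul (phi g) (Matrix.of P) := by
  funext z
  have lhs : phi (Matrix.vecMul g (residualQ P)) z
      = ∑ p : S × S, g p * (P p.1 z - P p.2 z) := by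
    simp only [phi, Matrix.vecMul, dotProduct]
    have c1 : ∑ y, ∑ p : S × S, g p * residualQ P p (z, y)
        = ∑ p : S × S, ∑ y, g p * residualQ P p (z, y) := Finset.sum_comm
    have c2 : ∑ y, ∑ p : S × S, g p * residualQ P p (y, z)
        = ∑ p : S × S, ∑ y, g p * residualQ P p (y, z) := Finset.sum_comm
    rw [c1, c2, ← Finset.sum_sub_distrib]
    refine Finset.sum_congr rfl fun p _ => ?_
    rw [← Finset.mul_sum, ← Finset.mul_sum, ← mul_sub]
    congr 1
    have := marg P hP1 p.1 p.2 z
    simpa using this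
  have rhs : Matrix.vecMul (phi g) (Matrix.of P) z
      = ∑ p : S × S, g p * (P p.1 z - P p.2 z) := by
    simp only [phi, Matrix.vecMul, dotProduct, Matrix.of_apply]
    simp only [sub_mul, mul_sub, Finset.sum_sub_distrib, Finset.sum_mul]
    congr 1
    · rw [Fintype.sum_prod_type]
    · rw [Fintype.sum_prod_type, Finset.sum_comm]
  rw [lhs, rhs]

lemma phi_vecMul_pow (hP1 : ∀ x, ∑ y, P x y = 1) (g : S × S → ℝ) (n : ℕ) :
    phi (Matrix.vecMul g (residualQ P ^ n)) = Matrix.vecMul (phi g) (Matrix.of P ^ n) := by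
  induction n with
  | zero => simp
  | succ n ih =>
    rw [pow_succ, pow_succ, ← Matrix.vecMul_vecMul, ← Matrix.vecMul_vecMul,
      phi_vecMul P hP1, ih]

lemma iterate_eq (μ : S → ℝ) (n : ℕ) :
    (fun v y => ∑ x, v x * P x y)^[n] μ = Matrix.vecMul μ (Matrix.of P ^ n) := by
  induction n with
  | zero => simp
  | succ n ih =>
    rw [Function.iterate_succ_apply', ih, pow_succ, ← Matrix.vecMul_vecMul]
    rfl

end TVAux

/-- The coupling bound underlying Theorem 1: the total variation distance between
`μ Pⁿ` and `ν Pⁿ` is controlled by the maximal row sum of `Qⁿ`. -/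
theorem tv_le_maxRowSum_pow [Nonempty S]
    (P : S → S → ℝ) (hP0 : ∀ x y, 0 ≤ P x y) (hP1 : ∀ x, ∑ y, P x y = 1)
    (n : ℕ) (hn : 1 ≤ n)
    (μ ν : S → ℝ) (hμ0 : ∀ x, 0 ≤ μ x) (hν0 : ∀ x, 0 ≤ ν x)
    (hμ1 : ∑ x, μ x = 1) (hν1 : ∑ x, ν x = 1) :
    ∑ x, |((fun v y => ∑ x, v x * P x y)^[n] μ) x - ((fun v y => ∑ x, v x * P x y)^[n] ν) x|
      ≤ maxRowSum (residualQ P ^ n) * ∑ x, |μ x - ν x| := by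
  classical
  set f : S → ℝ := fun z => μ z - ν z with hf
  set fp : S → ℝ := fun z => max (f z) 0 with hfp
  set fm : S → ℝ := fun z => max (-(f z)) 0 with hfm
  have hfp0 : ∀ z, 0 ≤ fp z := fun z => le_max_right _ _
  have hfm0 : ∀ z, 0 ≤ fm z := fun z => le_max_right _ _
  have habs : ∀ z, |f z| = fp z + fm z := by
    intro z
    rcases le_total (f z) 0 with h | h
    · rw [abs_of_nonpos h]; simp [hfp, hfm, max_eq_right h, max_eq_left (neg_nonneg.2 h)]
    · rw [abs_of_nonneg h]; simp [hfp, hfm, max_eq_left h, max_eq_right (neg_nonpos.2 h)]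
  have hdiff : ∀ z, fp z - fm z = f z := by
    intro z
    rcases le_total (f z) 0 with h | h
    · simp [hfp, hfm, max_eq_right h, max_eq_left (neg_nonneg.2 h)]
    · simp [hfp, hfm, max_eq_left h, max_eq_right (neg_nonpos.2 h)]
  have hsumf : ∑ z, f z = 0 := by
    simp only [hf, Finset.sum_sub_distrib, hμ1, hν1, sub_self]
  set m : ℝ := ∑ z, fp z with hm
  have hm0 : 0 ≤ m := Finset.sum_nonneg fun z _ => hfp0 z
  have hmm : ∑ z, fm z = m := by
    have : ∑ z, (fp z - fm z) = 0 := by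
      rw [Finset.sum_congr rfl fun z _ => hdiff z, hsumf]
    rw [Finset.sum_sub_distrib] at this
    linarith
  have habsum : ∑ z, |f z| = 2 * m := by
    rw [Finset.sum_congr rfl fun z _ => habs z, Finset.sum_add_distrib, hmm]; ring
  set M : ℝ := maxRowSum (residualQ P ^ n) with hM
  have hrow : ∀ q : S × S, ∑ p, (residualQ P ^ n) q p ≤ M := by
    intro q
    have := le_ciSup (f := fun i : S × S => ∑ j, (residualQ P ^ n) i j)
      (Set.Finite.bddAbove (Set.finite_range _)) q
    simpa [hM, maxRowSum] using this
  rw [TVAux.iterate_eq P μ n, TVAux.iterate_eq P ν n]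
  by_cases hmz : m = 0
  · have hfz : ∀ z, f z = 0 := by
      intro z
      have h1 : fp z = 0 := by
        have := (Finset.sum_eq_zero_iff_of_nonneg (fun z _ => hfp0 z)).1 hmz z (Finset.mem_univ z)
        exact this
      have h2 : fm z = 0 := by
        have := (Finset.sum_eq_zero_iff_of_nonneg (fun z _ => hfm0 z)).1 (hmm.trans hmz) z (Finset.mem_univ z)
        exact this
      rw [← hdiff z, h1, h2, sub_self]
    have hμν : μ = ν := funext fun z => by have := hfz z; simp only [hf] at this; linarith
    rw [hμν]
    simp [habsum, hmz]
  · have hmpos : 0 < m := lt_of_le_of_ne hm0 (Ne.symm hmz)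
    set g : S × S → ℝ := fun p => fp p.1 * fm p.2 / m with hg
    have hg0 : ∀ p, 0 ≤ g p := fun p =>
      div_nonneg (mul_nonneg (hfp0 _) (hfm0 _)) hm0
    have hphig : TVAux.phi g = f := by
      funext z
      simp only [TVAux.phi, hg]
      have e1 : ∑ y, fp z * fm y / m = fp z := by
        rw [← Finset.sum_div, ← Finset.mul_sum, hmm, mul_div_assoc, div_self hmz, mul_one]
      have e2 : ∑ y, fp y * fm z / m = fm z := by
        rw [← Finset.sum_div, ← Finset.sum_mul, ← hm, mul_comm, mul_div_assoc,
          div_self hmz, mul_one]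
      rw [e1, e2, hdiff z]
    set h : S × S → ℝ := Matrix.vecMul g (residualQ P ^ n) with hh
    have hh0 : ∀ p, 0 ≤ h p := by
      intro p
      exact Finset.sum_nonneg fun q _ => mul_nonneg (hg0 q) (TVAux.residualQ_pow_nonneg P n q p)
    have hkey : ∀ z, Matrix.vecMul μ (Matrix.of P ^ n) z - Matrix.vecMul ν (Matrix.of P ^ n) z
        = TVAux.phi h z := by
      intro z
      rw [hh, TVAux.phi_vecMul_pow P hP1 g n, hphig]
      simp only [Matrix.vecMul, dotProduct, hf]
      rw [← Finset.sum_sub_distrib]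
      exact Finset.sum_congr rfl fun w _ => by ring
    calc ∑ z, |Matrix.vecMul μ (Matrix.of P ^ n) z - Matrix.vecMul ν (Matrix.of P ^ n) z|
        = ∑ z, |TVAux.phi h z| := Finset.sum_congr rfl fun z _ => by rw [hkey z]
      _ ≤ ∑ z, ((∑ y, h (z, y)) + (∑ y, h (y, z))) := by
          refine Finset.sum_le_sum fun z _ => ?_
          simp only [TVAux.phi]
          refine (abs_sub _ _).trans ?_
          rw [abs_of_nonneg (Finset.sum_nonneg fun y _ => hh0 _),
            abs_of_nonneg (Finset.sum_nonneg fun y _ => hh0 _)]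
      _ = 2 * ∑ p : S × S, h p := by
          rw [Finset.sum_add_distrib]
          have c1 : ∑ z, ∑ y, h (z, y) = ∑ p : S × S, h p :=
            (Fintype.sum_prod_type _).symm
          have c2 : ∑ z, ∑ y, h (y, z) = ∑ p : S × S, h p := by
            rw [Finset.sum_comm]
            exact (Fintype.sum_prod_type _).symm
          rw [c1, c2]; ring
      _ ≤ 2 * (M * m) := by
          have : ∑ p : S × S, h p ≤ M * m := by
            have e : ∑ p : S × S, h p = ∑ q : S × S, g q * ∑ p, (residualQ P ^ n) q p := by
              simp only [hh, Matrix.vecMul, dotProduct]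
              rw [Finset.sum_comm]
              exact Finset.sum_congr rfl fun q _ => by rw [← Finset.mul_sum]
            rw [e]
            have : ∑ q : S × S, g q * ∑ p, (residualQ P ^ n) q p ≤ ∑ q : S × S, g q * M :=
              Finset.sum_le_sum fun q _ => mul_le_mul_of_nonneg_left (hrow q) (hg0 q)
            refine this.trans ?_
            rw [← Finset.sum_mul]
            have hgsum : ∑ q : S × S, g q = m := by
              simp only [hg]
              rw [Fintype.sum_prod_type]
              have e1 : ∀ a, ∑ b, fp a * fm b / m = fp a := by
                intro a
                rw [← Finset.sum_div, ← Finset.mul_sum, hmm, mul_div_assoc,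
                  div_self hmz, mul_one]
              simp only [e1]
              exact hm.symm
            rw [hgsum, mul_comm]
          linarith
      _ = M * ∑ x, |μ x - ν x| := by
          have : ∑ x, |μ x - ν x| = 2 * m := habsum
          rw [this]; ring
end

section
/- Let S be a finite type and P a row-stochastic matrix on S, with overlap coefficient κ(x,y) = ∑_z min(P(x,z),P(y,z)) and residual coupling matrix Q (defined by Q((x,y),(x',y')) = (P(x,x') − min(P(x,x'),P(y,x')))·(P(y,y') − min(P(x,y'),P(y,y')))/(1 − κ(x,y)) for x ≠ y with κ(x,y) < 1, and 0 otherwise). Then: (a) for every x ≠ y with κ(x,y) < 1, the row sum ∑_{(x',y')} Q((x,y),(x',y')) equals 1 − κ(x,y); and (b) if α = min_{x ≠ y} κ(x,y) (assuming S has at least two elements), then maxRowSum(Qⁿ) ≤ (1 − α)ⁿ for all n ∈ ℕ, where maxRowSum(A) = max_i ∑_j A(i,j). -/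
open Finset

variable {S : Type*} [Fintype S] [DecidableEq S]

lemma residualQ_nonneg (P : S → S → ℝ) (hP0 : ∀ x y, 0 ≤ P x y) (p p' : S × S) :
    0 ≤ residualQ P p p' := by
  unfold residualQ
  simp only [Matrix.of_apply]
  split_ifs with h
  · apply div_nonneg
    · apply mul_nonneg <;> simp [min_le_left, min_le_right, sub_nonneg]
    · linarith [h.2]
  · exact le_rfl

lemma residualQ_rowSum (P : S → S → ℝ) (hP1 : ∀ x, ∑ y, P x y = 1)
    (x y : S) (hxy : x ≠ y) (hk : overlap P x y < 1) :
    ∑ p' : S × S, residualQ P (x, y) p' = 1 - overlap P x y := by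
  have hne : (1 : ℝ) - overlap P x y ≠ 0 := by linarith
  have h1 : ∑ z, (P x z - min (P x z) (P y z)) = 1 - overlap P x y := by
    rw [Finset.sum_sub_distrib, hP1, overlap]
  have h2 : ∑ z, (P y z - min (P x z) (P y z)) = 1 - overlap P x y := by
    rw [Finset.sum_sub_distrib, hP1, overlap]
  unfold residualQ
  simp only [Matrix.of_apply, hxy, hk, and_true, ne_eq, not_false_eq_true, if_true]
  rw [Fintype.sum_prod_type]
  simp only [div_eq_mul_inv, mul_assoc, ← Finset.mul_sum, ← Finset.sum_mul]
  rw [h1, h2]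
  field_simp

lemma overlap_nonneg (P : S → S → ℝ) (hP0 : ∀ x y, 0 ≤ P x y) (x y : S) :
    0 ≤ overlap P x y :=
  Finset.sum_nonneg fun z _ => le_min (hP0 x z) (hP0 y z)

lemma overlap_le_one (P : S → S → ℝ) (hP0 : ∀ x y, 0 ≤ P x y)
    (hP1 : ∀ x, ∑ y, P x y = 1) (x y : S) : overlap P x y ≤ 1 := by
  rw [← hP1 x]
  exact Finset.sum_le_sum fun z _ => min_le_left _ _

/-- (a) The row sums of `Q` equal the one-step uncoupling probabilities `1 − κ(x,y)`;
(b) with `α` the Markov–Dobrushin coefficient `min_{x ≠ y} κ(x,y)`, the maximal row sum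
of `Qⁿ` is at most `(1 − α)ⁿ`. -/
theorem residualQ_rowSum_and_dobrushin [Nonempty S]
    (P : S → S → ℝ) (hP0 : ∀ x y, 0 ≤ P x y) (hP1 : ∀ x, ∑ y, P x y = 1)
    (hcard : 2 ≤ Fintype.card S) :
    (∀ x y : S, x ≠ y → overlap P x y < 1 →
      ∑ p' : S × S, residualQ P (x, y) p' = 1 - overlap P x y) ∧
    (∀ n : ℕ, maxRowSum (residualQ P ^ n)
      ≤ (1 - sInf {r : ℝ | ∃ x y : S, x ≠ y ∧ r = overlap P x y}) ^ n) := by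
  set α := sInf {r : ℝ | ∃ x y : S, x ≠ y ∧ r = overlap P x y} with hα
  obtain ⟨a, b, hab⟩ := Fintype.exists_pair_of_one_lt_card (α := S) (by omega)
  have hSne : {r : ℝ | ∃ x y : S, x ≠ y ∧ r = overlap P x y}.Nonempty :=
    ⟨overlap P a b, a, b, hab, rfl⟩
  have hbdd : BddBelow {r : ℝ | ∃ x y : S, x ≠ y ∧ r = overlap P x y} := by
    refine ⟨0, fun r hr => ?_⟩
    obtain ⟨x, y, _, rfl⟩ := hr
    exact overlap_nonneg P hP0 x y
  have hαle : ∀ x y : S, x ≠ y → α ≤ overlap P x y := fun x y hxy =>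
    csInf_le hbdd ⟨x, y, hxy, rfl⟩
  have hα1 : α ≤ 1 := (hαle a b hab).trans (overlap_le_one P hP0 hP1 a b)
  have hrow : ∀ p : S × S, ∑ p' : S × S, residualQ P p p' ≤ 1 - α := by
    intro ⟨x, y⟩
    by_cases h : x ≠ y ∧ overlap P x y < 1
    · rw [residualQ_rowSum P hP1 x y h.1 h.2]
      linarith [hαle x y h.1]
    · have : ∀ p' : S × S, residualQ P (x, y) p' = 0 := by
        intro p'; unfold residualQ; simp only [Matrix.of_apply]; rw [if_neg h]
      simp only [this, Finset.sum_const_zero]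
      linarith
  have key : ∀ n : ℕ, (∀ p p' : S × S, 0 ≤ (residualQ P ^ n) p p') ∧
      (∀ p : S × S, ∑ p' : S × S, (residualQ P ^ n) p p' ≤ (1 - α) ^ n) := by
    intro n
    induction n with
    | zero =>
      constructor
      · intro p p'
        simp [Matrix.one_apply]
        split_ifs <;> norm_num
      · intro p
        simp [Matrix.one_apply]
    | succ n ih =>
      have hQ : residualQ P ^ (n + 1) = residualQ P ^ n * residualQ P := pow_succ _ _
      constructor
      · intro p p'
        rw [hQ, Matrix.mul_apply]
        exact Finset.sum_nonneg fun k _ =>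
          mul_nonneg (ih.1 p k) (residualQ_nonneg P hP0 k p')
      · intro p
        rw [hQ]
        simp only [Matrix.mul_apply]
        rw [Finset.sum_comm]
        calc ∑ k : S × S, ∑ p' : S × S, (residualQ P ^ n) p k * residualQ P k p'
            = ∑ k : S × S, (residualQ P ^ n) p k * ∑ p' : S × S, residualQ P k p' := by
              simp [Finset.mul_sum]
          _ ≤ ∑ k : S × S, (residualQ P ^ n) p k * (1 - α) :=
              Finset.sum_le_sum fun k _ =>
                mul_le_mul_of_nonneg_left (hrow k) (ih.1 p k)
          _ = (∑ k : S × S, (residualQ P ^ n) p k) * (1 - α) := by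
              rw [Finset.sum_mul]
          _ ≤ (1 - α) ^ n * (1 - α) :=
              mul_le_mul_of_nonneg_right (ih.2 p) (by linarith)
          _ = (1 - α) ^ (n + 1) := (pow_succ _ _).symm
  refine ⟨fun x y hxy hk => residualQ_rowSum P hP1 x y hxy hk, fun n => ?_⟩
  exact ciSup_le fun p => (key n).2 p
end

section
/- Let S be a finite type, n ∈ ℕ, and γ ≥ 0. Let μ₀ be a probability vector on S, let P₀,…,P_{n−1} be row-stochastic matrices on S with all entries strictly positive, and let P* be a row-stochastic matrix on S such that P*(x,y) ≤ (1+γ)·P_i(x,y) for all i < n and all x,y ∈ S. For a trajectory a : Fin(n+1) → S define the path weight w(a) = μ₀(a(0))·∏_{i<n} P_i(a(i),a(i+1)) and the likelihood ratio ρ(a) = ∏_{i<n} P*(a(i),a(i+1))/P_i(a(i),a(i+1)). Then for every integer k ≥ 1: ∑_{a : Fin(n+1) → S} w(a)·ρ(a)^k ≤ (1+γ)^{n(k−1)}. -/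
open Finset

lemma sum_path {S : Type*} [Fintype S] :
    ∀ (n : ℕ) (μ : S → ℝ), (∑ x, μ x = 1) →
    ∀ (Q : Fin n → S → S → ℝ), (∀ i x, ∑ y, Q i x y = 1) →
    ∑ a : Fin (n+1) → S, μ (a 0) * ∏ i : Fin n, Q i (a i.castSucc) (a i.succ) = 1 := by
  intro n
  induction n with
  | zero =>
    intro μ hμ Q hQ
    rw [← hμ]
    exact Fintype.sum_equiv (Equiv.funUnique (Fin 1) S) _ _ (by simp)
  | succ n ih =>
    intro μ hμ Q hQ
    rw [← Fintype.sum_equiv (Fin.snocEquiv (fun _ : Fin (n+2) => S))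
      (fun p : S × (Fin (n+1) → S) => μ ((Fin.snoc p.2 p.1 : Fin (n+2) → S) 0) *
        ∏ i : Fin (n+1), Q i ((Fin.snoc p.2 p.1 : Fin (n+2) → S) i.castSucc)
          ((Fin.snoc p.2 p.1 : Fin (n+2) → S) i.succ))
      (fun a : Fin (n+2) → S => μ (a 0) * ∏ i : Fin (n+1), Q i (a i.castSucc) (a i.succ))
      (fun p => by rfl)]
    rw [Fintype.sum_prod_type_right]
    have key : ∀ (b : Fin (n+1) → S) (x : S),
        μ ((Fin.snoc b x : Fin (n+2) → S) 0) * ∏ i : Fin (n+1), Q i ((Fin.snoc b x : Fin (n+2) → S) i.castSucc) ((Fin.snoc b x : Fin (n+2) → S) i.succ)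
        = (μ (b 0) * ∏ i : Fin n, Q i.castSucc (b i.castSucc) (b i.succ)) *
            Q (Fin.last n) (b (Fin.last n)) x := by
      intro b x
      have h0 : (Fin.snoc b x : Fin (n+2) → S) 0 = b 0 := by
        have h : (0 : Fin (n+2)) = Fin.castSucc 0 := rfl
        rw [h, Fin.snoc_castSucc]
      rw [h0, Fin.prod_univ_castSucc]
      have hlast : Q (Fin.last n) ((Fin.snoc b x : Fin (n+2) → S) (Fin.last n).castSucc)
            ((Fin.snoc b x : Fin (n+2) → S) (Fin.last n).succ) = Q (Fin.last n) (b (Fin.last n)) x := by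
        rw [Fin.snoc_castSucc]
        congr 1
        have h : (Fin.last n).succ = Fin.last (n+1) := rfl
        rw [h, Fin.snoc_last]
      rw [hlast, mul_assoc]
      congr 2
      refine Finset.prod_congr rfl fun i _ => ?_
      rw [Fin.succ_castSucc, Fin.snoc_castSucc, Fin.snoc_castSucc]
    have key2 : ∀ b : Fin (n+1) → S,
        ∑ x : S, μ ((Fin.snoc b x : Fin (n+2) → S) 0) *
          ∏ i : Fin (n+1), Q i ((Fin.snoc b x : Fin (n+2) → S) i.castSucc)
            ((Fin.snoc b x : Fin (n+2) → S) i.succ)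
        = μ (b 0) * ∏ i : Fin n, Q i.castSucc (b i.castSucc) (b i.succ) := by
      intro b
      rw [Finset.sum_congr rfl fun x _ => key b x, ← Finset.mul_sum, hQ, mul_one]
    rw [Finset.sum_congr rfl fun b _ => key2 b]
    exact ih μ hμ _ (fun i x => hQ i.castSucc x)

/-- The moment bound from the proof of Theorem 3: the `k`-th moment of the likelihood
ratio of the linear chain `P*` with respect to the nonlinear chain with step matrices
`P i` is at most `(1+γ)^(n(k−1))`. -/
theorem likelihood_ratio_moment_bound
    {S : Type*} [Fintype S] (n : ℕ) (γ : ℝ) (hγ : 0 ≤ γ)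
    (μ0 : S → ℝ) (hμ00 : ∀ x, 0 ≤ μ0 x) (hμ01 : ∑ x, μ0 x = 1)
    (P : Fin n → S → S → ℝ)
    (hP0 : ∀ i x y, 0 < P i x y) (hP1 : ∀ i x, ∑ y, P i x y = 1)
    (Pstar : S → S → ℝ) (hPs0 : ∀ x y, 0 ≤ Pstar x y) (hPs1 : ∀ x, ∑ y, Pstar x y = 1)
    (hdom : ∀ i x y, Pstar x y ≤ (1 + γ) * P i x y)
    (k : ℕ) (hk : 1 ≤ k) :
    ∑ a : Fin (n + 1) → S,
      (μ0 (a 0) * ∏ i : Fin n, P i (a i.castSucc) (a i.succ)) *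
        (∏ i : Fin n, Pstar (a i.castSucc) (a i.succ) / P i (a i.castSucc) (a i.succ)) ^ k
      ≤ (1 + γ) ^ (n * (k - 1)) := by
  have hstep : ∀ (i : Fin n) (x y : S),
      P i x y * (Pstar x y / P i x y) ^ k ≤ (1 + γ) ^ (k - 1) * Pstar x y := by
    intro i x y
    obtain ⟨m, rfl⟩ := Nat.exists_eq_add_of_le hk
    have hpos := hP0 i x y
    have h1 : P i x y * (Pstar x y / P i x y) ^ (1 + m)
        = Pstar x y * (Pstar x y / P i x y) ^ m := by
      rw [pow_add, pow_one]
      field_simp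
    rw [h1, Nat.add_sub_cancel_left]
    have hle : Pstar x y / P i x y ≤ 1 + γ := by
      rw [div_le_iff₀ hpos]; exact hdom i x y
    have h0 : 0 ≤ Pstar x y / P i x y := div_nonneg (hPs0 x y) hpos.le
    calc Pstar x y * (Pstar x y / P i x y) ^ m
        ≤ Pstar x y * (1 + γ) ^ m := by
          exact mul_le_mul_of_nonneg_left (pow_le_pow_left₀ h0 hle m) (hPs0 x y)
      _ = (1 + γ) ^ m * Pstar x y := mul_comm _ _
  have hterm : ∀ a : Fin (n + 1) → S,
      (μ0 (a 0) * ∏ i : Fin n, P i (a i.castSucc) (a i.succ)) *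
        (∏ i : Fin n, Pstar (a i.castSucc) (a i.succ) / P i (a i.castSucc) (a i.succ)) ^ k
      ≤ (1 + γ) ^ (n * (k - 1)) * (μ0 (a 0) * ∏ i : Fin n, Pstar (a i.castSucc) (a i.succ)) := by
    intro a
    rw [← Finset.prod_pow, mul_assoc, ← Finset.prod_mul_distrib]
    have hprod : ∏ i : Fin n,
        P i (a i.castSucc) (a i.succ) *
          (Pstar (a i.castSucc) (a i.succ) / P i (a i.castSucc) (a i.succ)) ^ k
        ≤ ∏ i : Fin n, (1 + γ) ^ (k - 1) * Pstar (a i.castSucc) (a i.succ) := by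
      apply Finset.prod_le_prod
      · intro i _
        exact mul_nonneg (hP0 i _ _).le (pow_nonneg (div_nonneg (hPs0 _ _) (hP0 i _ _).le) k)
      · intro i _
        exact hstep i _ _
    calc μ0 (a 0) * ∏ i : Fin n,
          P i (a i.castSucc) (a i.succ) *
            (Pstar (a i.castSucc) (a i.succ) / P i (a i.castSucc) (a i.succ)) ^ k
        ≤ μ0 (a 0) * ∏ i : Fin n, (1 + γ) ^ (k - 1) * Pstar (a i.castSucc) (a i.succ) :=
          mul_le_mul_of_nonneg_left hprod (hμ00 _)
      _ = (1 + γ) ^ (n * (k - 1)) * (μ0 (a 0) * ∏ i : Fin n, Pstar (a i.castSucc) (a i.succ)) := by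
          rw [Finset.prod_mul_distrib, Finset.prod_const, Finset.card_univ, Fintype.card_fin,
            ← pow_mul, Nat.mul_comm (k-1) n]
          ring
  calc ∑ a : Fin (n + 1) → S,
      (μ0 (a 0) * ∏ i : Fin n, P i (a i.castSucc) (a i.succ)) *
        (∏ i : Fin n, Pstar (a i.castSucc) (a i.succ) / P i (a i.castSucc) (a i.succ)) ^ k
      ≤ ∑ a : Fin (n + 1) → S,
        (1 + γ) ^ (n * (k - 1)) * (μ0 (a 0) * ∏ i : Fin n, Pstar (a i.castSucc) (a i.succ)) :=
        Finset.sum_le_sum fun a _ => hterm a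
    _ = (1 + γ) ^ (n * (k - 1)) := by
        rw [← Finset.mul_sum, sum_path n μ0 hμ01 (fun _ => Pstar) (fun _ x => hPs1 x), mul_one]
end

section
/- Let S be a finite type, n ∈ ℕ, and γ ≥ 0. Let μ₀ be a probability vector on S, let P₀,…,P_{n−1} be row-stochastic matrices on S with all entries strictly positive, and let P* be a row-stochastic matrix on S. For a trajectory a : Fin(n+1) → S define w(a) = μ₀(a(0))·∏_{i<n} P_i(a(i),a(i+1)) and ρ(a) = ∏_{i<n} P*(a(i),a(i+1))/P_i(a(i),a(i+1)), and set μₙ(x) = ∑_{a : a(n)=x} w(a) and μₙ*(x) = ∑_{a : a(n)=x} μ₀(a(0))·∏_{i<n} P*(a(i),a(i+1)). Then ∑_{x ∈ S} |μₙ(x) − μₙ*(x)| ≤ 2·∑_{a : Fin(n+1) → S} w(a)·max(0, 1 − ρ(a)). -/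
open Finset

lemma path_sum_eq {S : Type*} [Fintype S] :
    ∀ (n : ℕ) (μ0 : S → ℝ) (Q : Fin n → S → S → ℝ), (∀ i x, ∑ y, Q i x y = 1) →
      ∑ a : Fin (n + 1) → S, μ0 (a 0) * ∏ i : Fin n, Q i (a i.castSucc) (a i.succ)
        = ∑ x, μ0 x := by
  intro n
  induction n with
  | zero =>
    intro μ0 Q hQ
    simp only [Fin.prod_univ_zero, mul_one]
    exact Fintype.sum_equiv (Equiv.funUnique (Fin 1) S) _ _ (fun a => rfl)
  | succ n ih =>
    intro μ0 Q hQ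
    rw [← Fintype.sum_equiv (Fin.snocEquiv (fun _ => S))
      (fun p => μ0 (Fin.snocEquiv (fun _ => S) p 0) *
        ∏ i : Fin (n + 1), Q i ((Fin.snocEquiv (fun _ => S) p) i.castSucc)
          ((Fin.snocEquiv (fun _ => S) p) i.succ))
      (fun a => μ0 (a 0) * ∏ i : Fin (n + 1), Q i (a i.castSucc) (a i.succ))
      (fun p => rfl)]
    rw [Fintype.sum_prod_type]
    have key : ∀ b : Fin (n + 1) → S,
        ∑ x : S, (μ0 ((Fin.snoc b x : Fin (n+2) → S) 0) *
          ∏ i : Fin (n + 1), Q i ((Fin.snoc b x : Fin (n+2) → S) i.castSucc)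
            ((Fin.snoc b x : Fin (n+2) → S) i.succ))
        = μ0 (b 0) * ∏ i : Fin n, Q i.castSucc (b i.castSucc) (b i.succ) := by
      intro b
      have h0 : ∀ x : S, (Fin.snoc b x : Fin (n+2) → S) 0 = b 0 := by
        intro x
        have : (0 : Fin (n + 2)) = Fin.castSucc 0 := rfl
        rw [this, Fin.snoc_castSucc]
      have hprod : ∀ x : S,
          ∏ i : Fin (n + 1), Q i ((Fin.snoc b x : Fin (n+2) → S) i.castSucc)
            ((Fin.snoc b x : Fin (n+2) → S) i.succ)
          = (∏ i : Fin n, Q i.castSucc (b i.castSucc) (b i.succ)) *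
              Q (Fin.last n) (b (Fin.last n)) x := by
        intro x
        rw [Fin.prod_univ_castSucc]
        congr 1
        · refine Finset.prod_congr rfl fun i _ => ?_
          have h1 : (Fin.snoc b x : Fin (n+2) → S) i.castSucc.castSucc = b i.castSucc :=
            Fin.snoc_castSucc ..
          have h2 : (Fin.snoc b x : Fin (n+2) → S) i.castSucc.succ = b i.succ := by
            rw [Fin.succ_castSucc, Fin.snoc_castSucc]
          rw [h1, h2]
        · have h1 : (Fin.snoc b x : Fin (n+2) → S) (Fin.last n).castSucc = b (Fin.last n) :=
            Fin.snoc_castSucc ..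
          have h2 : (Fin.snoc b x : Fin (n+2) → S) (Fin.last n).succ = x := by
            rw [Fin.succ_last, Fin.snoc_last]
          rw [h1, h2]
      calc ∑ x : S, (μ0 ((Fin.snoc b x : Fin (n+2) → S) 0) *
            ∏ i : Fin (n + 1), Q i ((Fin.snoc b x : Fin (n+2) → S) i.castSucc)
              ((Fin.snoc b x : Fin (n+2) → S) i.succ))
          = ∑ x : S, μ0 (b 0) * ((∏ i : Fin n, Q i.castSucc (b i.castSucc) (b i.succ)) *
              Q (Fin.last n) (b (Fin.last n)) x) := by
            refine Finset.sum_congr rfl fun x _ => ?_; rw [h0 x, hprod x]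
        _ = μ0 (b 0) * ∏ i : Fin n, Q i.castSucc (b i.castSucc) (b i.succ) := by
            rw [← Finset.mul_sum, ← Finset.mul_sum, hQ (Fin.last n) (b (Fin.last n)), mul_one]
    rw [Finset.sum_comm]
    calc ∑ b : Fin (n + 1) → S, ∑ x : S,
          (μ0 ((Fin.snocEquiv (fun _ => S) (x, b)) 0) *
            ∏ i : Fin (n + 1), Q i ((Fin.snocEquiv (fun _ => S) (x, b)) i.castSucc)
              ((Fin.snocEquiv (fun _ => S) (x, b)) i.succ))
        = ∑ b : Fin (n + 1) → S,
            μ0 (b 0) * ∏ i : Fin n, Q i.castSucc (b i.castSucc) (b i.succ) := by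
          refine Finset.sum_congr rfl fun b _ => ?_
          exact key b
      _ = ∑ x, μ0 x := ih μ0 (fun i => Q i.castSucc) (fun i x => hQ i.castSucc x)

set_option maxHeartbeats 1600000 in
/-- The trajectory-overlap bound from the proof of Theorem 3:
`‖μₙ − μₙ*‖_TV ≤ 2 𝔼[(1 − ρₙ) 𝟙(ρₙ < 1)]`. -/
theorem tv_le_expected_ratio_defect
    {S : Type*} [Fintype S] [DecidableEq S] (n : ℕ) (γ : ℝ) (hγ : 0 ≤ γ)
    (μ0 : S → ℝ) (hμ00 : ∀ x, 0 ≤ μ0 x) (hμ01 : ∑ x, μ0 x = 1)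
    (P : Fin n → S → S → ℝ)
    (hP0 : ∀ i x y, 0 < P i x y) (hP1 : ∀ i x, ∑ y, P i x y = 1)
    (Pstar : S → S → ℝ) (hPs0 : ∀ x y, 0 ≤ Pstar x y) (hPs1 : ∀ x, ∑ y, Pstar x y = 1) :
    ∑ x : S,
      |(∑ a ∈ univ.filter (fun a : Fin (n + 1) → S => a (Fin.last n) = x),
          μ0 (a 0) * ∏ i : Fin n, P i (a i.castSucc) (a i.succ)) -
        (∑ a ∈ univ.filter (fun a : Fin (n + 1) → S => a (Fin.last n) = x),
          μ0 (a 0) * ∏ i : Fin n, Pstar (a i.castSucc) (a i.succ))|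
      ≤ 2 * ∑ a : Fin (n + 1) → S,
          (μ0 (a 0) * ∏ i : Fin n, P i (a i.castSucc) (a i.succ)) *
            max 0 (1 - ∏ i : Fin n,
              Pstar (a i.castSucc) (a i.succ) / P i (a i.castSucc) (a i.succ)) := by
  set f : (Fin (n + 1) → S) → ℝ :=
    fun a => μ0 (a 0) * ∏ i : Fin n, P i (a i.castSucc) (a i.succ) with hf
  set g : (Fin (n + 1) → S) → ℝ :=
    fun a => μ0 (a 0) * ∏ i : Fin n, Pstar (a i.castSucc) (a i.succ) with hg
  set ρ : (Fin (n + 1) → S) → ℝ :=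
    fun a => ∏ i : Fin n,
      Pstar (a i.castSucc) (a i.succ) / P i (a i.castSucc) (a i.succ) with hρ
  have hfnn : ∀ a, 0 ≤ f a := fun a =>
    mul_nonneg (hμ00 _) (Finset.prod_nonneg fun i _ => (hP0 i _ _).le)
  have hfg : ∀ a, f a - g a = f a * (1 - ρ a) := by
    intro a
    have : f a * ρ a = g a := by
      simp only [hf, hg, hρ, mul_assoc, ← Finset.prod_mul_distrib]
      congr 1
      refine Finset.prod_congr rfl fun i _ => ?_
      rw [mul_comm, div_mul_cancel₀ _ (hP0 i _ _).ne']
    rw [mul_sub, mul_one, this]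
  -- fiberwise sums
  have hfib : ∀ h : (Fin (n + 1) → S) → ℝ,
      ∑ x : S, ∑ a ∈ univ.filter (fun a : Fin (n + 1) → S => a (Fin.last n) = x), h a
        = ∑ a, h a := by
    intro h
    rw [Finset.sum_fiberwise]
  have hsum0 : ∑ x : S,
      ((∑ a ∈ univ.filter (fun a : Fin (n + 1) → S => a (Fin.last n) = x), f a) -
       (∑ a ∈ univ.filter (fun a : Fin (n + 1) → S => a (Fin.last n) = x), g a)) = 0 := by
    rw [Finset.sum_sub_distrib, hfib f, hfib g]
    simp only [hf, hg]
    rw [path_sum_eq n μ0 P hP1, path_sum_eq n μ0 (fun _ => Pstar) (fun _ => hPs1)]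
    ring
  have habs : ∀ t : ℝ, |t| = 2 * max 0 t - t := by
    intro t
    rcases le_or_gt 0 t with h | h
    · rw [abs_of_nonneg h, max_eq_right h]; ring
    · rw [abs_of_neg h, max_eq_left h.le]; ring
  calc ∑ x : S,
      |(∑ a ∈ univ.filter (fun a : Fin (n + 1) → S => a (Fin.last n) = x), f a) -
        (∑ a ∈ univ.filter (fun a : Fin (n + 1) → S => a (Fin.last n) = x), g a)|
      = ∑ x : S, (2 * max 0
          ((∑ a ∈ univ.filter (fun a : Fin (n + 1) → S => a (Fin.last n) = x), f a) -
           (∑ a ∈ univ.filter (fun a : Fin (n + 1) → S => a (Fin.last n) = x), g a)) -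
          ((∑ a ∈ univ.filter (fun a : Fin (n + 1) → S => a (Fin.last n) = x), f a) -
           (∑ a ∈ univ.filter (fun a : Fin (n + 1) → S => a (Fin.last n) = x), g a))) := by
        exact Finset.sum_congr rfl fun x _ => habs _
    _ = 2 * ∑ x : S, max 0
          ((∑ a ∈ univ.filter (fun a : Fin (n + 1) → S => a (Fin.last n) = x), f a) -
           (∑ a ∈ univ.filter (fun a : Fin (n + 1) → S => a (Fin.last n) = x), g a)) := by
        rw [Finset.sum_sub_distrib, hsum0, sub_zero, ← Finset.mul_sum]
    _ ≤ 2 * ∑ x : S,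
          ∑ a ∈ univ.filter (fun a : Fin (n + 1) → S => a (Fin.last n) = x),
            f a * max 0 (1 - ρ a) := by
        refine mul_le_mul_of_nonneg_left (Finset.sum_le_sum fun x _ => ?_) (by norm_num)
        refine max_le (Finset.sum_nonneg fun a _ =>
          mul_nonneg (hfnn a) (le_max_left 0 _)) ?_
        rw [← Finset.sum_sub_distrib]
        refine Finset.sum_le_sum fun a _ => ?_
        rw [hfg a]
        exact mul_le_mul_of_nonneg_left (le_max_right 0 _) (hfnn a)
    _ = 2 * ∑ a : Fin (n + 1) → S, f a * max 0 (1 - ρ a) := by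
        rw [hfib (fun a => f a * max 0 (1 - ρ a))]
end

section
/- Let S be a finite type, n ∈ ℕ, and γ ≥ 0. Let μ₀ be a probability vector on S, let P₀,…,P_{n−1} be row-stochastic matrices on S with all entries strictly positive, and let P* be a row-stochastic matrix on S such that P*(x,y) ≤ (1+γ)·P_i(x,y) for all i < n and all x,y ∈ S. Let μₙ(x) = ∑_{a : a(n)=x} μ₀(a(0))·∏_{i<n} P_i(a(i),a(i+1)) be the time-n law of the nonlinear chain and μₙ*(x) = ∑_{a : a(n)=x} μ₀(a(0))·∏_{i<n} P*(a(i),a(i+1)) the time-n law of the linear chain, the sums ranging over trajectories a : Fin(n+1) → S. Then ∑_{x ∈ S} |μₙ(x) − μₙ*(x)| ≤ 2·(e^{−(1+γ)ⁿ} + (1+γ)ⁿ − 1)/(1+γ)ⁿ. -/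
open Finset

lemma traj_sum {S : Type*} [Fintype S] [DecidableEq S] :
    ∀ (n : ℕ) (μ : S → ℝ), (∑ x, μ x = 1) → ∀ (Q : Fin n → S → S → ℝ),
      (∀ i x, ∑ y, Q i x y = 1) →
      ∑ a : Fin (n+1) → S, μ (a 0) * ∏ i : Fin n, Q i (a i.castSucc) (a i.succ) = 1 := by
  intro n
  induction n with
  | zero =>
    intro μ hμ Q hQ
    simp only [Fin.prod_univ_zero, mul_one]
    rw [Fintype.sum_equiv (Equiv.funUnique (Fin 1) S) (fun a => μ (a 0)) μ (fun a => rfl)]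
    exact hμ
  | succ n ih =>
    intro μ hμ Q hQ
    set f : (Fin (n+2) → S) → ℝ :=
      fun a => μ (a 0) * ∏ i : Fin (n+1), Q i (a i.castSucc) (a i.succ) with hf
    have h1 : ∑ a : Fin (n+2) → S, f a
        = ∑ p : S × (Fin (n+1) → S), f (Fin.cons p.1 p.2) :=
      (Fintype.sum_equiv (Fin.consEquiv (fun _ : Fin (n+2) => S))
        (fun p => f (Fin.cons p.1 p.2)) f (fun p => rfl)).symm
    have key : ∀ (x : S) (b : Fin (n+1) → S),
        f (Fin.cons x b)
        = (μ x * Q 0 x (b 0)) *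
          ∏ i : Fin n, Q i.succ (b i.castSucc) (b i.succ) := by
      intro x b
      simp only [hf, Fin.prod_univ_succ, Fin.cons_zero, Fin.castSucc_zero,
        ← Fin.succ_castSucc, Fin.cons_succ, mul_assoc]
    rw [h1, Fintype.sum_prod_type, Finset.sum_comm]
    have := ih (fun y => ∑ x, μ x * Q 0 x y)
      (by rw [Finset.sum_comm]; simp only [← Finset.mul_sum]
          rw [← hμ]; exact Finset.sum_congr rfl fun x _ => by rw [hQ 0 x, mul_one])
      (fun i => Q i.succ) (fun i x => hQ i.succ x)
    rw [← this]
    apply Finset.sum_congr rfl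
    intro b _
    rw [Finset.sum_mul]
    apply Finset.sum_congr rfl
    intro x _
    rw [key x b]

/-- Theorem 3 (exact form): under the domination condition `P* ≤ (1+γ) Pᵢ`, the total
variation distance at time `n` between the nonlinear chain and its linear mapping chain
is at most `2 (e^{−M} + M − 1)/M` with `M = (1+γ)ⁿ`. -/
theorem tv_nonlinear_vs_linear_bound
    {S : Type*} [Fintype S] [DecidableEq S] (n : ℕ) (γ : ℝ) (hγ : 0 ≤ γ)
    (μ0 : S → ℝ) (hμ00 : ∀ x, 0 ≤ μ0 x) (hμ01 : ∑ x, μ0 x = 1)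
    (P : Fin n → S → S → ℝ)
    (hP0 : ∀ i x y, 0 < P i x y) (hP1 : ∀ i x, ∑ y, P i x y = 1)
    (Pstar : S → S → ℝ) (hPs0 : ∀ x y, 0 ≤ Pstar x y) (hPs1 : ∀ x, ∑ y, Pstar x y = 1)
    (hdom : ∀ i x y, Pstar x y ≤ (1 + γ) * P i x y) :
    ∑ x : S,
      |(∑ a ∈ univ.filter (fun a : Fin (n + 1) → S => a (Fin.last n) = x),
          μ0 (a 0) * ∏ i : Fin n, P i (a i.castSucc) (a i.succ)) -
        (∑ a ∈ univ.filter (fun a : Fin (n + 1) → S => a (Fin.last n) = x),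
          μ0 (a 0) * ∏ i : Fin n, Pstar (a i.castSucc) (a i.succ))|
      ≤ 2 * (Real.exp (-(1 + γ) ^ n) + (1 + γ) ^ n - 1) / (1 + γ) ^ n := by
  set M : ℝ := (1 + γ) ^ n with hMdef
  have hM1 : (1 : ℝ) ≤ M := one_le_pow₀ (by linarith)
  have hM0 : (0 : ℝ) < M := by linarith
  set ν : (Fin (n+1) → S) → ℝ :=
    fun a => μ0 (a 0) * ∏ i : Fin n, P i (a i.castSucc) (a i.succ) with hν
  set νs : (Fin (n+1) → S) → ℝ :=
    fun a => μ0 (a 0) * ∏ i : Fin n, Pstar (a i.castSucc) (a i.succ) with hνs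
  have hνsum : ∑ a : Fin (n+1) → S, ν a = 1 := traj_sum n μ0 hμ01 P hP1
  have hνssum : ∑ a : Fin (n+1) → S, νs a = 1 :=
    traj_sum n μ0 hμ01 (fun _ => Pstar) (fun _ => hPs1)
  have hν0 : ∀ a, 0 ≤ ν a := fun a =>
    mul_nonneg (hμ00 _) (Finset.prod_nonneg fun i _ => (hP0 i _ _).le)
  have hνs0 : ∀ a, 0 ≤ νs a := fun a =>
    mul_nonneg (hμ00 _) (Finset.prod_nonneg fun i _ => hPs0 _ _)
  have hdom' : ∀ a, νs a ≤ M * ν a := by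
    intro a
    have h1 : ∏ i : Fin n, Pstar (a i.castSucc) (a i.succ)
        ≤ ∏ i : Fin n, (1 + γ) * P i (a i.castSucc) (a i.succ) :=
      Finset.prod_le_prod (fun i _ => hPs0 _ _) (fun i _ => hdom i _ _)
    have h2 : ∏ i : Fin n, (1 + γ) * P i (a i.castSucc) (a i.succ)
        = M * ∏ i : Fin n, P i (a i.castSucc) (a i.succ) := by
      rw [Finset.prod_mul_distrib, Finset.prod_const, Finset.card_univ, Fintype.card_fin]
    calc νs a ≤ μ0 (a 0) * (M * ∏ i : Fin n, P i (a i.castSucc) (a i.succ)) := by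
          rw [← h2]; exact mul_le_mul_of_nonneg_left h1 (hμ00 _)
      _ = M * ν a := by rw [hν]; ring
  have step1 : ∑ x : S,
      |(∑ a ∈ univ.filter (fun a : Fin (n + 1) → S => a (Fin.last n) = x), ν a) -
        (∑ a ∈ univ.filter (fun a : Fin (n + 1) → S => a (Fin.last n) = x), νs a)|
      ≤ ∑ a : Fin (n+1) → S, |ν a - νs a| := by
    rw [← Finset.sum_fiberwise univ (fun a : Fin (n+1) → S => a (Fin.last n))
      (fun a => |ν a - νs a|)]
    apply Finset.sum_le_sum
    intro x _
    rw [← Finset.sum_sub_distrib]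
    exact Finset.abs_sum_le_sum_abs _ _
  have step2 : ∑ a : Fin (n+1) → S, |ν a - νs a| ≤ 2 - 2 / M := by
    have pt : ∀ a, |ν a - νs a| ≤ ν a + νs a - (2 / M) * νs a := by
      intro a
      have hA : (2 / M) * νs a ≤ 2 * ν a := by
        calc (2 / M) * νs a ≤ (2 / M) * (M * ν a) := by
              apply mul_le_mul_of_nonneg_left (hdom' a) (by positivity)
          _ = 2 * ν a := by field_simp
      have hB : (2 / M) * νs a ≤ 2 * νs a := by
        apply mul_le_mul_of_nonneg_right _ (hνs0 a)
        calc 2 / M ≤ 2 / 1 := by apply div_le_div_of_nonneg_left (by norm_num) one_pos hM1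
          _ = 2 := by norm_num
      rw [abs_sub_le_iff]
      constructor <;> linarith
    calc ∑ a : Fin (n+1) → S, |ν a - νs a|
        ≤ ∑ a : Fin (n+1) → S, (ν a + νs a - (2 / M) * νs a) :=
          Finset.sum_le_sum fun a _ => pt a
      _ = 2 - 2 / M := by
          rw [Finset.sum_sub_distrib, Finset.sum_add_distrib, ← Finset.mul_sum,
            hνsum, hνssum]
          ring
  have final : 2 - 2 / M ≤ 2 * (Real.exp (-M) + M - 1) / M := by
    have he : 0 < Real.exp (-M) := Real.exp_pos _
    have h : 2 - 2 / M = 2 * (M - 1) / M := by field_simp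
    rw [h]
    gcongr
    linarith
  calc ∑ x : S,
      |(∑ a ∈ univ.filter (fun a : Fin (n + 1) → S => a (Fin.last n) = x), ν a) -
        (∑ a ∈ univ.filter (fun a : Fin (n + 1) → S => a (Fin.last n) = x), νs a)|
      ≤ ∑ a : Fin (n+1) → S, |ν a - νs a| := step1
    _ ≤ 2 - 2 / M := step2
    _ ≤ 2 * (Real.exp (-M) + M - 1) / M := final
end

section
/- Let S be a finite type with card S = p ≥ 2, n ∈ ℕ, γ ≥ 0, and δ ≥ 0. Let P₀,…,P_{n−1} be row-stochastic matrices on S with all entries strictly positive (the step transition matrices of a nonlinear Markov chain), and let P* be a row-stochastic matrix on S with P*(x,y) ≤ (1+γ)·P_i(x,y) for all i < n and all x,y. Let μ₀ be the uniform probability vector on S (μ₀(x) = 1/p), let μₙ(x) = ∑_{a : a(n)=x} μ₀(a(0))·∏_{i<n} P_i(a(i),a(i+1)) be the time-n law of the nonlinear chain, let π* be a probability vector on S that is stationary for P* (i.e., ∑_x π*(x)P*(x,y) = π*(y) for all y), and let π be a probability vector on S with ∑_x |π(x) − π*(x)| ≤ δ. Let Q be the residual coupling matrix of P*, i.e.,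 with κ(x,y) = ∑_z min(P*(x,z),P*(y,z)), Q((x,y),(x',y')) = (P*(x,x') − min(P*(x,x'),P*(y,x')))·(P*(y,y') − min(P*(x,y'),P*(y,y')))/(1 − κ(x,y)) for x ≠ y with κ(x,y) < 1, and 0 otherwise. Then ∑_{x ∈ S} |μₙ(x) − π(x)| ≤ 2·(e^{−(1+γ)ⁿ} + (1+γ)ⁿ − 1)/(1+γ)ⁿ + δ + 2·(1 − 1/p)·maxRowSum(Qⁿ), where maxRowSum(A) = max_i ∑_j A(i,j). -/
open Finset

variable {S : Type*} [Fintype S] [DecidableEq S]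

/-- The law of an inhomogeneous chain after `n` steps, defined recursively. -/
noncomputable def nlaw : (n : ℕ) → (Fin n → S → S → ℝ) → (S → ℝ) → S → ℝ
  | 0, _, v => v
  | n+1, K, v => fun x => ∑ y, nlaw n (fun i => K i.castSucc) v y * K (Fin.last n) y x

lemma nlaw_eq_pathsum (n : ℕ) (K : Fin n → S → S → ℝ) (v : S → ℝ) (x : S) :
    ∑ a ∈ univ.filter (fun a : Fin (n+1) → S => a (Fin.last n) = x),
      v (a 0) * ∏ i : Fin n, K i (a i.castSucc) (a i.succ) = nlaw n K v x := by
  induction n generalizing x with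
  | zero =>
      rw [Finset.sum_filter, ← (Equiv.funUnique (Fin 1) S).symm.sum_comp]
      simp [nlaw, Equiv.funUnique]
  | succ n ih =>
      show _ = ∑ y, nlaw n (fun i => K i.castSucc) v y * K (Fin.last n) y x
      have key : ∀ y, ∑ b ∈ univ.filter (fun b : Fin (n+1) → S => b (Fin.last n) = y),
          v (b 0) * (∏ i : Fin n, K i.castSucc (b i.castSucc) (b i.succ)) * K (Fin.last n) (b (Fin.last n)) x
          = nlaw n (fun i => K i.castSucc) v y * K (Fin.last n) y x := by
        intro y
        rw [← ih (fun i => K i.castSucc) y, Finset.sum_mul]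
        refine Finset.sum_congr rfl fun b hb => ?_
        simp only [mem_filter] at hb
        rw [hb.2]
      rw [← Finset.sum_congr rfl (fun y _ => key y)]
      rw [Finset.sum_fiberwise (univ : Finset (Fin (n+1) → S)) (fun b => b (Fin.last n))
        (fun b => v (b 0) * (∏ i : Fin n, K i.castSucc (b i.castSucc) (b i.succ)) * K (Fin.last n) (b (Fin.last n)) x)]
      refine Finset.sum_nbij' (fun a => Fin.init a) (fun b => Fin.snoc b x) ?_ ?_ ?_ ?_ ?_
      · intro a _; exact mem_univ _
      · intro b _; simp [mem_filter, Fin.snoc_last]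
      · intro a ha
        simp only [mem_filter] at ha
        rw [← ha.2]
        exact Fin.snoc_init_self a
      · intro b _; simp
      · intro a ha
        simp only [mem_filter] at ha
        rw [Fin.prod_univ_castSucc (fun i : Fin (n+1) => K i (a i.castSucc) (a i.succ)),
          ← mul_assoc]
        have h2 : ∀ i : Fin n, K i.castSucc (a i.castSucc.castSucc) (a i.castSucc.succ)
            = K i.castSucc (Fin.init a i.castSucc) (Fin.init a i.succ) := fun i => by
          simp only [Fin.init, Fin.succ_castSucc]
        have h3 : a (Fin.last n).succ = x := by rw [Fin.succ_last]; exact ha.2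
        rw [Finset.prod_congr rfl (fun i _ => h2 i)]
        simp only [Fin.init, h3, Fin.castSucc_zero]

lemma nlaw_nonneg (n : ℕ) (K : Fin n → S → S → ℝ) (v : S → ℝ)
    (hK : ∀ i x y, 0 ≤ K i x y) (hv : ∀ x, 0 ≤ v x) : ∀ x, 0 ≤ nlaw n K v x := by
  induction n with
  | zero => exact hv
  | succ n ih =>
      intro x
      exact Finset.sum_nonneg fun y _ => mul_nonneg (ih _ (fun i x y => hK _ _ _) y) (hK _ _ _)

lemma nlaw_sum (n : ℕ) (K : Fin n → S → S → ℝ) (v : S → ℝ)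
    (hK : ∀ i x, ∑ y, K i x y = 1) : ∑ x, nlaw n K v x = ∑ x, v x := by
  induction n with
  | zero => rfl
  | succ n ih =>
      show ∑ x, ∑ y, nlaw n (fun i => K i.castSucc) v y * K (Fin.last n) y x = _
      rw [Finset.sum_comm]
      simp_rw [← Finset.mul_sum, hK, mul_one]
      exact ih _ (fun i x => hK _ _)

lemma nlaw_const (n : ℕ) (P : S → S → ℝ) (v : S → ℝ) (x : S) :
    nlaw n (fun _ => P) v x = ∑ y, v y * (Matrix.of P ^ n) y x := by
  induction n generalizing x with
  | zero => simp [nlaw, Matrix.one_apply]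
  | succ n ih =>
      show ∑ y, nlaw n (fun _ => P) v y * P y x = _
      simp_rw [ih, Finset.sum_mul, mul_assoc]
      rw [Finset.sum_comm]
      congr 1
      ext y
      rw [← Finset.mul_sum, pow_succ, Matrix.mul_apply]
      rfl





lemma residualQ_nonneg_s13 (P : S → S → ℝ) :
    ∀ s t : S × S, 0 ≤ residualQ P s t := by
  intro s t
  unfold residualQ
  simp only [Matrix.of_apply]
  split_ifs with h
  · have h1 : (0:ℝ) < 1 - overlap P s.1 s.2 := by linarith [h.2]
    exact div_nonneg (mul_nonneg (sub_nonneg.mpr (min_le_left _ _))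
      (sub_nonneg.mpr (min_le_right _ _))) h1.le
  · exact le_refl 0

lemma pow_entry_nonneg {I : Type*} [Fintype I] [DecidableEq I] {A : Matrix I I ℝ}
    (hA : ∀ s t, 0 ≤ A s t) : ∀ (n : ℕ) (s t : I), 0 ≤ (A ^ n) s t := by
  intro n
  induction n with
  | zero =>
      intro s t
      rw [pow_zero, Matrix.one_apply]
      split_ifs <;> norm_num
  | succ n ih =>
      intro s t
      rw [pow_succ, Matrix.mul_apply]
      exact Finset.sum_nonneg fun u _ => mul_nonneg (ih s u) (hA u t)

lemma tv_pow_le (P : S → S → ℝ) (h0 : ∀ x y, 0 ≤ P x y) (h1 : ∀ x, ∑ y, P x y = 1) :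
    ∀ (n : ℕ) (x y : S), x ≠ y →
    ∑ z, |(Matrix.of P ^ n) x z - (Matrix.of P ^ n) y z|
      ≤ 2 * ∑ t, (residualQ P ^ n) (x, y) t := by
  intro n
  induction n with
  | zero =>
      intro x y hxy
      simp only [pow_zero]
      calc ∑ z, |(1 : Matrix S S ℝ) x z - (1 : Matrix S S ℝ) y z|
          ≤ ∑ z, (|(1 : Matrix S S ℝ) x z| + |(1 : Matrix S S ℝ) y z|) :=
            Finset.sum_le_sum fun z _ => abs_sub _ _
        _ = 2 := by
            simp [Matrix.one_apply, apply_ite abs, Finset.sum_add_distrib,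
              Finset.sum_ite_eq]
            norm_num
        _ = 2 * ∑ t, (1 : Matrix (S×S) (S×S) ℝ) (x,y) t := by
            simp [Matrix.one_apply]
  | succ n ih =>
      intro x y hxy
      set M := Matrix.of P with hM
      set Q := residualQ P with hQ
      set κ := overlap P x y with hκdef
      have hmsum : ∑ z, min (P x z) (P y z) = κ := rfl
      have hκle : κ ≤ 1 := by
        rw [hκdef, overlap, ← h1 x]
        exact Finset.sum_le_sum fun z _ => min_le_left _ _
      have hQ0 : ∀ s t, 0 ≤ Q s t := residualQ_nonneg_s13 P
      have hQpow0 : ∀ (m : ℕ) (s t), 0 ≤ (Q ^ m) s t := pow_entry_nonneg hQ0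
      by_cases hκ1 : κ < 1
      · -- main coupling case
        set A := fun z => P x z - min (P x z) (P y z) with hA
        set B := fun z => P y z - min (P x z) (P y z) with hB
        have hA0 : ∀ z, 0 ≤ A z := fun z => sub_nonneg.mpr (min_le_left _ _)
        have hB0 : ∀ z, 0 ≤ B z := fun z => sub_nonneg.mpr (min_le_right _ _)
        have hAsum : ∑ z, A z = 1 - κ := by
          rw [hA]; rw [Finset.sum_sub_distrib, h1, hmsum]
        have hBsum : ∑ z, B z = 1 - κ := by
          rw [hB]; rw [Finset.sum_sub_distrib, h1, hmsum]
        have hpos : (0:ℝ) < 1 - κ := by linarith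
        set w := fun x' y' => (if x' = y' then min (P x x') (P y x') else 0)
          + A x' * B y' / (1-κ) with hw
        have hw0 : ∀ x' y', 0 ≤ w x' y' := by
          intro x' y'
          apply add_nonneg
          · split_ifs
            · exact le_min (h0 x x') (h0 y x')
            · exact le_refl 0
          · exact div_nonneg (mul_nonneg (hA0 x') (hB0 y')) hpos.le
        have hwrow : ∀ x', ∑ y', w x' y' = P x x' := by
          intro x'
          simp only [hw]
          rw [Finset.sum_add_distrib, Finset.sum_ite_eq univ x'
            (fun _ => min (P x x') (P y x'))]
          simp only [mem_univ, if_pos]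
          rw [← Finset.sum_div, ← Finset.mul_sum, hBsum, mul_div_assoc,
            div_self hpos.ne', mul_one]
          simp only [hA]
          ring
        have hwcol : ∀ y', ∑ x', w x' y' = P y y' := by
          intro y'
          simp only [hw]
          rw [Finset.sum_add_distrib, Finset.sum_ite_eq' univ y'
            (fun z => min (P x z) (P y z))]
          simp only [mem_univ, if_pos]
          rw [← Finset.sum_div, ← Finset.sum_mul, hAsum, mul_comm, mul_div_assoc,
            div_self hpos.ne', mul_one]
          simp only [hB]
          ring
        have hwq : ∀ x' y', x' ≠ y' → w x' y' = Q (x,y) (x',y') := by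
          intro x' y' hne
          simp only [hw, if_neg hne, zero_add, hQ]
          unfold residualQ
          simp only [Matrix.of_apply]
          rw [if_pos ⟨hxy, hκ1⟩]
        have step1 : ∀ z, (M ^ (n+1)) x z - (M ^ (n+1)) y z
            = ∑ x', ∑ y', w x' y' * ((M^n) x' z - (M^n) y' z) := by
          intro z
          rw [pow_succ', Matrix.mul_apply, Matrix.mul_apply]
          have e1 : ∑ x', M x x' * (M^n) x' z = ∑ x', ∑ y', w x' y' * (M^n) x' z := by
            refine Finset.sum_congr rfl fun x' _ => ?_
            rw [← Finset.sum_mul, hwrow]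
            rfl
          have e2 : ∑ y', M y y' * (M^n) y' z = ∑ x', ∑ y', w x' y' * (M^n) y' z := by
            rw [Finset.sum_comm]
            refine Finset.sum_congr rfl fun y' _ => ?_
            rw [← Finset.sum_mul, hwcol]
            rfl
          rw [e1, e2, ← Finset.sum_sub_distrib]
          refine Finset.sum_congr rfl fun x' _ => ?_
          rw [← Finset.sum_sub_distrib]
          refine Finset.sum_congr rfl fun y' _ => ?_
          ring
        calc ∑ z, |(M ^ (n+1)) x z - (M ^ (n+1)) y z|
            = ∑ z, |∑ x', ∑ y', w x' y' * ((M^n) x' z - (M^n) y' z)| := by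
              exact Finset.sum_congr rfl fun z _ => by rw [step1 z]
          _ ≤ ∑ z, ∑ x', ∑ y', |w x' y' * ((M^n) x' z - (M^n) y' z)| := by
              refine Finset.sum_le_sum fun z _ => ?_
              refine (Finset.abs_sum_le_sum_abs _ _).trans ?_
              exact Finset.sum_le_sum fun x' _ => Finset.abs_sum_le_sum_abs _ _
          _ = ∑ x', ∑ y', w x' y' * ∑ z, |(M^n) x' z - (M^n) y' z| := by
              rw [Finset.sum_comm]
              refine Finset.sum_congr rfl fun x' _ => ?_
              rw [Finset.sum_comm]
              refine Finset.sum_congr rfl fun y' _ => ?_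
              rw [Finset.mul_sum]
              refine Finset.sum_congr rfl fun z _ => ?_
              rw [abs_mul, abs_of_nonneg (hw0 x' y')]
          _ ≤ ∑ x', ∑ y', Q (x,y) (x',y') * (2 * ∑ t, (Q^n) (x',y') t) := by
              refine Finset.sum_le_sum fun x' _ => Finset.sum_le_sum fun y' _ => ?_
              by_cases hne : x' = y'
              · subst hne
                simp only [sub_self, abs_zero, Finset.sum_const_zero, mul_zero]
                exact mul_nonneg (hQ0 _ _)
                  (mul_nonneg (by norm_num) (Finset.sum_nonneg fun t _ => hQpow0 n _ t))
              · rw [hwq x' y' hne]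
                exact mul_le_mul_of_nonneg_left (ih x' y' hne) (hQ0 _ _)
          _ = 2 * ∑ t, (Q ^ (n+1)) (x,y) t := by
              have : ∑ t, (Q ^ (n+1)) (x,y) t = ∑ s, Q (x,y) s * ∑ t, (Q^n) s t := by
                simp_rw [pow_succ', Matrix.mul_apply]
                rw [Finset.sum_comm]
                exact Finset.sum_congr rfl fun s _ => (Finset.mul_sum _ _ _).symm
              rw [this, Fintype.sum_prod_type, Finset.mul_sum]
              refine Finset.sum_congr rfl fun x' _ => ?_
              rw [Finset.mul_sum]
              refine Finset.sum_congr rfl fun y' _ => ?_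
              ring
      · -- rows of P at x and y coincide
        have hκ : κ = 1 := le_antisymm hκle (not_lt.mp hκ1)
        have hAsum0 : ∑ z, (P x z - min (P x z) (P y z)) = 0 := by
          rw [Finset.sum_sub_distrib, h1, hmsum, hκ, sub_self]
        have hBsum0 : ∑ z, (P y z - min (P x z) (P y z)) = 0 := by
          rw [Finset.sum_sub_distrib, h1, hmsum, hκ, sub_self]
        have hAz : ∀ z ∈ univ, P x z - min (P x z) (P y z) = 0 :=
          (Finset.sum_eq_zero_iff_of_nonneg
            (fun z _ => sub_nonneg.mpr (min_le_left _ _))).mp hAsum0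
        have hBz : ∀ z ∈ univ, P y z - min (P x z) (P y z) = 0 :=
          (Finset.sum_eq_zero_iff_of_nonneg
            (fun z _ => sub_nonneg.mpr (min_le_right _ _))).mp hBsum0
        have hrows : ∀ z, P x z = P y z := by
          intro z
          have ha := hAz z (mem_univ z)
          have hb := hBz z (mem_univ z)
          linarith
        have heq : ∀ z, (M ^ (n+1)) x z = (M ^ (n+1)) y z := by
          intro z
          rw [pow_succ', Matrix.mul_apply, Matrix.mul_apply]
          refine Finset.sum_congr rfl fun u _ => ?_
          have : M x u = M y u := hrows u
          rw [this]
        have : ∑ z, |(M ^ (n+1)) x z - (M ^ (n+1)) y z| = 0 := by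
          refine Finset.sum_eq_zero fun z _ => ?_
          rw [heq z, sub_self, abs_zero]
        rw [this]
        exact mul_nonneg (by norm_num) (Finset.sum_nonneg fun t _ => hQpow0 _ _ _)

/-- Theorem 4 (main result, precise non-asymptotic form): convergence bound for the
nonlinear Markov chain started from the uniform distribution, combining the
nonlinear-vs-linear bound, the coupling contraction of the linear chain, and the
uniform-initial-distribution bound. -/

theorem nonlinear_chain_convergence_bound [Nonempty S]
    (p n : ℕ) (hp : 2 ≤ p) (hcard : Fintype.card S = p)
    (γ δ : ℝ) (hγ : 0 ≤ γ) (hδ : 0 ≤ δ)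
    (P : Fin n → S → S → ℝ)
    (hP0 : ∀ i x y, 0 < P i x y) (hP1 : ∀ i x, ∑ y, P i x y = 1)
    (Pstar : S → S → ℝ) (hPs0 : ∀ x y, 0 ≤ Pstar x y) (hPs1 : ∀ x, ∑ y, Pstar x y = 1)
    (hdom : ∀ i x y, Pstar x y ≤ (1 + γ) * P i x y)
    (μ0 : S → ℝ) (hμ0 : μ0 = fun _ => 1 / (p : ℝ))
    (πstar : S → ℝ) (hπs0 : ∀ x, 0 ≤ πstar x) (hπs1 : ∑ x, πstar x = 1)
    (hstat : ∀ y, ∑ x, πstar x * Pstar x y = πstar y)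
    (π : S → ℝ) (hπ0 : ∀ x, 0 ≤ π x) (hπ1 : ∑ x, π x = 1)
    (hπδ : ∑ x, |π x - πstar x| ≤ δ) :
    ∑ x : S,
      |(∑ a ∈ univ.filter (fun a : Fin (n + 1) → S => a (Fin.last n) = x),
          μ0 (a 0) * ∏ i : Fin n, P i (a i.castSucc) (a i.succ)) - π x|
      ≤ 2 * (Real.exp (-(1 + γ) ^ n) + (1 + γ) ^ n - 1) / (1 + γ) ^ n + δ
        + 2 * (1 - 1 / (p : ℝ)) * maxRowSum (residualQ Pstar ^ n) := by
  have hpR : (0:ℝ) < (p:ℝ) := by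
    have : (0:ℕ) < p := by omega
    exact_mod_cast this
  set M := Matrix.of Pstar with hM
  set t := (1 + γ)^n with ht
  have ht1 : (1:ℝ) ≤ t := one_le_pow₀ (by linarith)
  have ht0 : (0:ℝ) < t := lt_of_lt_of_le one_pos ht1
  set μn := nlaw n P μ0 with hμn
  have hpath : ∀ x, (∑ a ∈ univ.filter (fun a : Fin (n + 1) → S => a (Fin.last n) = x),
      μ0 (a 0) * ∏ i : Fin n, P i (a i.castSucc) (a i.succ)) = μn x :=
    fun x => nlaw_eq_pathsum n P μ0 x
  set μns := fun x => ∑ y, μ0 y * (M ^ n) y x with hμns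
  have hμns_eq : ∀ x, nlaw n (fun _ => Pstar) μ0 x = μns x :=
    fun x => nlaw_const n Pstar μ0 x
  have hμ0sum : ∑ x, μ0 x = 1 := by
    rw [hμ0, Finset.sum_const, card_univ, hcard, nsmul_eq_mul]
    field_simp
  have hμ00 : ∀ x, 0 ≤ μ0 x := by
    rw [hμ0]; intro x; positivity
  have hμnsum : ∑ x, μn x = 1 := (nlaw_sum n P μ0 hP1).trans hμ0sum
  have hμn0 : ∀ x, 0 ≤ μn x :=
    nlaw_nonneg n P μ0 (fun i x y => (hP0 i x y).le) hμ00
  have hμnssum : ∑ x, μns x = 1 := by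
    rw [← Finset.sum_congr rfl (fun x _ => hμns_eq x)]
    exact (nlaw_sum n (fun _ => Pstar) μ0 (fun _ => hPs1)).trans hμ0sum
  have hMpow0 : ∀ (m : ℕ) (a b : S), 0 ≤ (M ^ m) a b :=
    pow_entry_nonneg (fun a b => hPs0 a b)
  have hμns0 : ∀ x, 0 ≤ μns x :=
    fun x => Finset.sum_nonneg fun y _ => mul_nonneg (hμ00 y) (hMpow0 n y x)
  -- Theorem 3 (weaker form): domination
  have hdomn : ∀ x, μns x ≤ t * μn x := by
    intro x
    rw [← hμns_eq x, ← nlaw_eq_pathsum n (fun _ => Pstar) μ0 x, hμn,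
      ← nlaw_eq_pathsum n P μ0 x, Finset.mul_sum]
    refine Finset.sum_le_sum fun a _ => ?_
    have hprod : ∏ i : Fin n, Pstar (a i.castSucc) (a i.succ)
        ≤ ∏ i : Fin n, ((1+γ) * P i (a i.castSucc) (a i.succ)) :=
      Finset.prod_le_prod (fun i _ => hPs0 _ _) (fun i _ => hdom i _ _)
    have hsplit : ∏ i : Fin n, ((1+γ) * P i (a i.castSucc) (a i.succ))
        = t * ∏ i : Fin n, P i (a i.castSucc) (a i.succ) := by
      rw [Finset.prod_mul_distrib, Finset.prod_const, card_univ, Fintype.card_fin, ht]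
    calc μ0 (a 0) * ∏ i : Fin n, Pstar (a i.castSucc) (a i.succ)
        ≤ μ0 (a 0) * (t * ∏ i : Fin n, P i (a i.castSucc) (a i.succ)) :=
          mul_le_mul_of_nonneg_left (hprod.trans_eq hsplit) (hμ00 _)
      _ = t * (μ0 (a 0) * ∏ i : Fin n, P i (a i.castSucc) (a i.succ)) := by ring
  -- Term 1
  have hT1 : ∑ x, |μn x - μns x| ≤ 2*(t-1)/t := by
    have key : ∀ x, |μn x - μns x| = 2 * max (μns x - μn x) 0 - (μns x - μn x) := by
      intro x
      rw [abs_sub_comm]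
      rcases le_total (μns x - μn x) 0 with h | h
      · rw [abs_of_nonpos h, max_eq_right h]; ring
      · rw [abs_of_nonneg h, max_eq_left h]; ring
    have hmax : ∀ x, max (μns x - μn x) 0 ≤ (1 - 1/t) * μns x := by
      intro x
      apply max_le
      · have h1t : μns x / t ≤ μn x := (div_le_iff₀ ht0).mpr
          (by rw [mul_comm]; exact hdomn x)
        have : (1 - 1/t) * μns x = μns x - μns x / t := by
          field_simp
        linarith
      · exact mul_nonneg (by
          have : 1/t ≤ 1 := by
            rw [div_le_one ht0]; exact ht1
          linarith) (hμns0 x)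
    calc ∑ x, |μn x - μns x|
        = ∑ x, (2 * max (μns x - μn x) 0 - (μns x - μn x)) :=
          Finset.sum_congr rfl fun x _ => key x
      _ = 2 * (∑ x, max (μns x - μn x) 0) - ((∑ x, μns x) - ∑ x, μn x) := by
          rw [Finset.sum_sub_distrib, ← Finset.mul_sum, Finset.sum_sub_distrib]
      _ = 2 * (∑ x, max (μns x - μn x) 0) := by rw [hμnssum, hμnsum]; ring
      _ ≤ 2 * ((1 - 1/t) * ∑ x, μns x) := by
          have h5 := Finset.sum_le_sum fun x (_ : x ∈ univ) => hmax x
          rw [← Finset.mul_sum] at h5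
          linarith
      _ = 2*(t-1)/t := by rw [hμnssum]; field_simp
  have hT1' : 2*(t-1)/t ≤ 2 * (Real.exp (-t) + t - 1) / t := by
    have h2 : 2*(t-1) ≤ 2 * (Real.exp (-t) + t - 1) := by
      nlinarith [(Real.exp_pos (-t)).le]
    exact div_le_div_of_nonneg_right h2 ht0.le
  -- stationarity under powers
  have hstatpow : ∀ (m : ℕ) (z : S), ∑ x0, πstar x0 * (M ^ m) x0 z = πstar z := by
    intro m
    induction m with
    | zero =>
        intro z
        simp only [pow_zero, Matrix.one_apply, mul_ite, mul_one, mul_zero]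
        rw [Finset.sum_ite_eq' univ z πstar]
        simp
    | succ m ihm =>
        intro z
        have : ∀ x0, (M ^ (m+1)) x0 z = ∑ u, (M ^ m) x0 u * Pstar u z := by
          intro x0
          rw [pow_succ, Matrix.mul_apply]
          rfl
        simp_rw [this, Finset.mul_sum]
        rw [Finset.sum_comm]
        have : ∀ u, ∑ x0, πstar x0 * ((M ^ m) x0 u * Pstar u z)
            = πstar u * Pstar u z := by
          intro u
          have h6 : ∀ x0, πstar x0 * ((M ^ m) x0 u * Pstar u z)
              = (πstar x0 * (M ^ m) x0 u) * Pstar u z := fun x0 => by ring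
          rw [Finset.sum_congr rfl fun x0 _ => h6 x0, ← Finset.sum_mul, ihm u]
        rw [Finset.sum_congr rfl fun u _ => this u]
        exact hstat z
  -- maxRowSum facts
  set Dmax := maxRowSum (residualQ Pstar ^ n) with hDmax
  have hQpow0 : ∀ (s u : S × S), 0 ≤ (residualQ Pstar ^ n) s u :=
    pow_entry_nonneg (residualQ_nonneg_s13 Pstar) n
  have hrowle : ∀ s : S × S, ∑ u, (residualQ Pstar ^ n) s u ≤ Dmax := by
    intro s
    exact le_ciSup (f := fun s : S × S => ∑ u, (residualQ Pstar ^ n) s u)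
      (Set.Finite.bddAbove (Set.finite_range _)) s
  have hDmax0 : 0 ≤ Dmax := by
    obtain ⟨s⟩ : Nonempty (S × S) := inferInstance
    exact le_trans (Finset.sum_nonneg fun u _ => hQpow0 s u) (hrowle s)
  -- Term 2
  have hT2 : ∑ x, |μns x - πstar x| ≤ 2 * (1 - 1/(p:ℝ)) * Dmax := by
    have hdecomp : ∀ x, μns x - πstar x
        = ∑ y, ∑ z, μ0 y * πstar z * ((M^n) y x - (M^n) z x) := by
      intro x
      have e1 : ∑ y, ∑ z, μ0 y * πstar z * (M^n) y x = μns x := by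
        refine Finset.sum_congr rfl fun y _ => ?_
        have : ∀ z, μ0 y * πstar z * (M^n) y x
            = (μ0 y * (M^n) y x) * πstar z := fun z => by ring
        rw [Finset.sum_congr rfl fun z _ => this z, ← Finset.mul_sum, hπs1, mul_one]
      have e2 : ∑ y, ∑ z, μ0 y * πstar z * (M^n) z x = πstar x := by
        have : ∀ y, ∑ z, μ0 y * πstar z * (M^n) z x
            = μ0 y * πstar x := by
          intro y
          have h3 : ∀ z, μ0 y * πstar z * (M^n) z x
              = μ0 y * (πstar z * (M^n) z x) := fun z => by ring
          rw [Finset.sum_congr rfl fun z _ => h3 z, ← Finset.mul_sum, hstatpow n x]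
        rw [Finset.sum_congr rfl fun y _ => this y, ← Finset.sum_mul, hμ0sum, one_mul]
      rw [← e1, ← e2, ← Finset.sum_sub_distrib]
      refine Finset.sum_congr rfl fun y _ => ?_
      rw [← Finset.sum_sub_distrib]
      exact Finset.sum_congr rfl fun z _ => by ring
    calc ∑ x, |μns x - πstar x|
        ≤ ∑ x, ∑ y, ∑ z, μ0 y * πstar z * |(M^n) y x - (M^n) z x| := by
          refine Finset.sum_le_sum fun x _ => ?_
          rw [hdecomp x]
          refine (Finset.abs_sum_le_sum_abs _ _).trans ?_
          refine Finset.sum_le_sum fun y _ => ?_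
          refine (Finset.abs_sum_le_sum_abs _ _).trans ?_
          refine Finset.sum_le_sum fun z _ => ?_
          rw [abs_mul, abs_of_nonneg (mul_nonneg (hμ00 y) (hπs0 z))]
      _ = ∑ y, ∑ z, μ0 y * πstar z * (∑ x, |(M^n) y x - (M^n) z x|) := by
          rw [Finset.sum_comm]
          refine Finset.sum_congr rfl fun y _ => ?_
          rw [Finset.sum_comm]
          refine Finset.sum_congr rfl fun z _ => ?_
          rw [Finset.mul_sum]
      _ ≤ ∑ y, ∑ z, μ0 y * πstar z * (if y = z then 0 else 2 * Dmax) := by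
          refine Finset.sum_le_sum fun y _ => Finset.sum_le_sum fun z _ => ?_
          by_cases hyz : y = z
          · subst hyz
            simp only [sub_self, abs_zero, Finset.sum_const_zero, if_pos]
            exact le_refl _
          · rw [if_neg hyz]
            refine mul_le_mul_of_nonneg_left ?_ (mul_nonneg (hμ00 y) (hπs0 z))
            exact (tv_pow_le Pstar hPs0 hPs1 n y z hyz).trans
              (mul_le_mul_of_nonneg_left (hrowle (y,z)) (by norm_num))
      _ = 2 * (1 - 1/(p:ℝ)) * Dmax := by
          have inner : ∀ y, ∑ z, μ0 y * πstar z * (if y = z then (0:ℝ) else 2*Dmax)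
              = μ0 y * (2*Dmax) * (1 - πstar y) := by
            intro y
            have h4 : ∀ z, μ0 y * πstar z * (if y = z then (0:ℝ) else 2*Dmax)
                = μ0 y * (2*Dmax) * πstar z
                  - (if y = z then μ0 y * (2*Dmax) * πstar z else 0) := by
              intro z; split_ifs with h <;> ring
            rw [Finset.sum_congr rfl fun z _ => h4 z, Finset.sum_sub_distrib,
              ← Finset.mul_sum, hπs1,
              Finset.sum_ite_eq univ y (fun z => μ0 y * (2*Dmax) * πstar z)]
            simp only [mem_univ, if_pos]
            ring
          rw [Finset.sum_congr rfl fun y _ => inner y]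
          have hsum : ∑ y : S, (1 - πstar y) = (p:ℝ) - 1 := by
            rw [Finset.sum_sub_distrib, Finset.sum_const, hπs1, card_univ, hcard]
            simp
          calc ∑ y, μ0 y * (2*Dmax) * (1 - πstar y)
              = ∑ y, (1/(p:ℝ)) * (2*Dmax) * (1 - πstar y) := by rw [hμ0]
            _ = (1/(p:ℝ)) * (2*Dmax) * ∑ y, (1 - πstar y) := by
                rw [Finset.mul_sum]
            _ = 2 * (1 - 1/(p:ℝ)) * Dmax := by
                rw [hsum]; field_simp
  -- Term 3
  have hT3 : ∑ x, |πstar x - π x| ≤ δ := by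
    refine le_trans (le_of_eq ?_) hπδ
    exact Finset.sum_congr rfl fun x _ => abs_sub_comm _ _
  -- combine
  calc ∑ x : S, |(∑ a ∈ univ.filter (fun a : Fin (n + 1) → S => a (Fin.last n) = x),
          μ0 (a 0) * ∏ i : Fin n, P i (a i.castSucc) (a i.succ)) - π x|
      = ∑ x, |μn x - π x| := Finset.sum_congr rfl fun x _ => by rw [hpath x]
    _ ≤ ∑ x, (|μn x - μns x| + |μns x - πstar x| + |πstar x - π x|) := by
        refine Finset.sum_le_sum fun x _ => ?_
        calc |μn x - π x| = |(μn x - μns x) + (μns x - πstar x) + (πstar x - π x)| := by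
              ring_nf
          _ ≤ |(μn x - μns x) + (μns x - πstar x)| + |πstar x - π x| := abs_add_le _ _
          _ ≤ |μn x - μns x| + |μns x - πstar x| + |πstar x - π x| := by
              have := abs_add_le (μn x - μns x) (μns x - πstar x)
              linarith
    _ = (∑ x, |μn x - μns x|) + (∑ x, |μns x - πstar x|) + ∑ x, |πstar x - π x| := by
        rw [Finset.sum_add_distrib, Finset.sum_add_distrib]
    _ ≤ 2 * (Real.exp (-t) + t - 1) / t + δ + 2 * (1 - 1/(p:ℝ)) * Dmax := by
        have := hT1.trans hT1'
        linarith
end
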